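/- arXiv:2205.00464 — 10 statements merged into one kernel-verified Lean document; each statement's English description precedes it below -/
import Mathlib

section
/- There do not exist complex numbers x₁, x₂ and complex numbers z₁, z₂ with rational real and imaginary parts and |z₁| = |z₂| = 1 such that x₁·z₁^j + x₂·z₂^j = (−2)^j/(j+1)! for every integer j with 0 ≤ j ≤ 2. (Equivalently: there is no quadrature formula of degree 2 for the Bessel weight with 2 nodes on ℚ(√−1) ∩ S¹.) -/
/-!
For a two-node rule exact in degree `≤ 2`, the node polynomial `(X - z₁)(X - z₂)` is annihilated
by the moment functional; for the Bessel moments `1, -1, 2/3` this reads `(z₁ + 1)(z₂ + 1) = 1/3`.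
On the unit circle `|z + 1|² = 2(1 + Re z)`, so taking squared moduli gives
`(1 + Re z₁)(1 + Re z₂) = 1/36`. But if `a² + b² = 1` with `a, b ∈ ℚ`, then `a` and `b` have a
common denominator `d` with `num a ^ 2 + num b ^ 2 = d ^ 2`, and a prime `p ≡ 3 (mod 4)` cannot
divide `d`, since `-1` is not a square mod `p`. Hence `3` divides no denominator on the left.
-/

namespace Rat

theorem den_eq_den_of_sq_add_sq_eq_one {a b : ℚ} (h : a ^ 2 + b ^ 2 = 1) : a.den = b.den := by
  have hsq : (a ^ 2).den = (b ^ 2).den := by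
    rw [eq_sub_of_add_eq' h, ← Int.cast_one, intCast_sub_den]
  rw [den_pow, den_pow] at hsq
  exact Nat.pow_left_injective two_ne_zero hsq

theorem num_sq_add_num_sq_of_sq_add_sq_eq_one {a b : ℚ} (h : a ^ 2 + b ^ 2 = 1) :
    a.num ^ 2 + b.num ^ 2 = (a.den : ℤ) ^ 2 := by
  have hden := den_eq_den_of_sq_add_sq_eq_one h
  rw [← Int.cast_inj (α := ℚ)]
  push_cast
  rw [← mul_den_eq_num, ← mul_den_eq_num, ← hden]
  linear_combination (a.den : ℚ) ^ 2 * h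

theorem not_dvd_den_of_sq_add_sq_eq_one {p : ℕ} [Fact p.Prime] (hp : p % 4 = 3) {a b : ℚ}
    (h : a ^ 2 + b ^ 2 = 1) : ¬ p ∣ a.den := by
  intro hpd
  have hnum : (a.num : ZMod p) ≠ 0 := by
    rw [Ne, ZMod.intCast_zmod_eq_zero_iff_dvd, Int.natCast_dvd]
    intro hpn
    exact (Fact.out : p.Prime).ne_one ((a.reduced.coprime_dvd_left hpn).eq_one_of_dvd hpd)
  have hsq : (a.num : ZMod p) ^ 2 = -(b.num : ZMod p) ^ 2 := by
    have := congrArg (Int.cast : ℤ → ZMod p) (num_sq_add_num_sq_of_sq_add_sq_eq_one h)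
    push_cast at this
    rw [(ZMod.natCast_eq_zero_iff _ _).2 hpd] at this
    linear_combination this
  exact ZMod.mod_four_ne_three_of_sq_eq_neg_sq hnum hsq hp

theorem not_dvd_den_mul {p : ℕ} (hp : p.Prime) {a b : ℚ} (ha : ¬ p ∣ a.den)
    (hb : ¬ p ∣ b.den) : ¬ p ∣ (a * b).den := fun hab =>
  (hp.dvd_mul.1 (hab.trans (mul_den_dvd a b))).elim ha hb

end Rat

namespace Complex

theorem normSq_add_one_of_norm_eq_one {z : ℂ} (hz : ‖z‖ = 1) :
    normSq (z + 1) = 2 * (1 + z.re) := by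
  rw [normSq_add, normSq_eq_norm_sq, hz]
  simp only [map_one, mul_one, one_pow]
  ring

theorem sq_add_sq_eq_one_of_norm_ratCast_add_mul_I {a b : ℚ} (h : ‖(a : ℂ) + b * I‖ = 1) :
    a ^ 2 + b ^ 2 = 1 := by
  have hsq := normSq_add_mul_I a b
  rw [ofReal_ratCast, ofReal_ratCast, normSq_eq_norm_sq, h, one_pow] at hsq
  exact_mod_cast hsq.symm

end Complex

theorem two_node_rule_nodes_relation {R : Type*} [CommRing R] {x₁ x₂ z₁ z₂ : R} {m : ℕ → R}
    (h : ∀ j ≤ 2, x₁ * z₁ ^ j + x₂ * z₂ ^ j = m j) :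
    z₁ * z₂ * m 0 - (z₁ + z₂) * m 1 + m 2 = 0 := by
  linear_combination
    -(z₁ * z₂) * h 0 (by norm_num) + (z₁ + z₂) * h 1 (by norm_num) - h 2 (by norm_num)

/-- There is no quadrature formula of degree 2 for the Bessel weight with 2 nodes
on `ℚ(√-1) ∩ S¹`. -/
theorem no_bessel_quadrature_deg2_two_nodes :
    ¬ ∃ (x₁ x₂ z₁ z₂ : ℂ),
      (∃ a b : ℚ, z₁ = (a : ℂ) + (b : ℂ) * Complex.I) ∧
      (∃ a b : ℚ, z₂ = (a : ℂ) + (b : ℂ) * Complex.I) ∧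
      ‖z₁‖ = 1 ∧ ‖z₂‖ = 1 ∧
      (∀ j : ℕ, j ≤ 2 →
        x₁ * z₁ ^ j + x₂ * z₂ ^ j = (-2 : ℂ) ^ j / (Nat.factorial (j + 1) : ℂ)) := by
  rintro ⟨x₁, x₂, z₁, z₂, ⟨a₁, b₁, rfl⟩, ⟨a₂, b₂, rfl⟩, h₁, h₂, hq⟩
  have hprod : ((a₁ : ℂ) + b₁ * Complex.I + 1) * ((a₂ : ℂ) + b₂ * Complex.I + 1) = 1 / 3 := by
    have hnodes := two_node_rule_nodes_relation hq
    norm_num [Nat.factorial] at hnodes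
    linear_combination hnodes
  have hnormSq : (((1 + a₁) * (1 + a₂) : ℚ) : ℝ) = ((1 / 36 : ℚ) : ℝ) := by
    have hnorm := congrArg Complex.normSq hprod
    rw [map_mul, Complex.normSq_add_one_of_norm_eq_one h₁,
      Complex.normSq_add_one_of_norm_eq_one h₂] at hnorm
    norm_num [Complex.normSq_apply] at hnorm
    push_cast
    linear_combination hnorm / 4
  have hden_one_add (a b : ℚ) (h : ‖(a : ℂ) + b * Complex.I‖ = 1) : ¬ 3 ∣ (1 + a).den := by
    rw [← Nat.cast_one, Rat.natCast_add_den]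
    exact Rat.not_dvd_den_of_sq_add_sq_eq_one (p := 3) rfl
      (Complex.sq_add_sq_eq_one_of_norm_ratCast_add_mul_I h)
  apply Rat.not_dvd_den_mul Nat.prime_three (hden_one_add a₁ b₁ h₁) (hden_one_add a₂ b₂ h₂)
  rw [Rat.cast_injective hnormSq]
  norm_num
end

section
/- There do not exist complex numbers x₁, x₂, x₃ and pairwise distinct complex numbers z₁, z₂, z₃, each with rational real and imaginary parts and of modulus 1, such that ∑_{i=1}^{3} x_i·z_i^j = (−2)^j/(j+1)! for every integer j with 0 ≤ j ≤ 4. (Equivalently: there is no quadrature formula of degree 4 for the Bessel weight with 3 nodes on ℚ(√−1) ∩ S¹.) -/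
/-!
The node polynomial `(X - z₀)(X - z₁)(X - z₂) = X³ - s X² + p X - q` annihilates the moments, so
the moments `m₀, …, m₄` impose two linear relations on `s, p, q`. On the other hand, for nodes
on the unit circle the node polynomial is self-inversive: `conj s * q = p` and `‖q‖ = 1`.
The linear relations then force `s`, hence `q`, to be real, so `q² = 1`, and the remaining
relation pins down `q = -14/11`, a contradiction.
-/

open ComplexConjugate

theorem Fin.sum_mul_pow_mul_nodePoly_eq_zero {R : Type*} [CommRing R] (x z : Fin 3 → R)
    (j : ℕ) :
    ∑ i, x i * z i ^ (j + 3) - (z 0 + z 1 + z 2) * ∑ i, x i * z i ^ (j + 2)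
      + (z 0 * z 1 + z 0 * z 2 + z 1 * z 2) * ∑ i, x i * z i ^ (j + 1)
      - z 0 * z 1 * z 2 * ∑ i, x i * z i ^ j = 0 := by
  simp only [Fin.sum_univ_three]
  ring

theorem Complex.conj_mul_self_of_norm_eq_one {z : ℂ} (hz : ‖z‖ = 1) : conj z * z = 1 := by
  rw [Complex.conj_mul', hz]
  norm_num

theorem Complex.conj_sum_mul_prod_of_norm_eq_one {z₀ z₁ z₂ : ℂ} (h₀ : ‖z₀‖ = 1)
    (h₁ : ‖z₁‖ = 1) (h₂ : ‖z₂‖ = 1) :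
    conj (z₀ + z₁ + z₂) * (z₀ * z₁ * z₂) = z₀ * z₁ + z₀ * z₂ + z₁ * z₂ := by
  simp only [map_add]
  linear_combination z₁ * z₂ * Complex.conj_mul_self_of_norm_eq_one h₀
    + z₀ * z₂ * Complex.conj_mul_self_of_norm_eq_one h₁
    + z₀ * z₁ * Complex.conj_mul_self_of_norm_eq_one h₂

theorem bessel_nodePoly_not_selfInversive {s p q : ℂ}
    (h₀ : q + p + 2 / 3 * s + 1 / 3 = 0) (h₁ : q + 2 / 3 * p + 1 / 3 * s + 2 / 15 = 0)
    (hconj : conj s * q = p) (hq : ‖q‖ = 1) : False := by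
  have hsp : s + p = -3 / 5 := by linear_combination 3 * h₀ - 3 * h₁
  have hqs : q = 4 / 15 + s / 3 := by linear_combination h₀ - hsp
  have hs_real : conj s = s := by
    have hp : conj s * (4 / 15 + s / 3) = p := by rw [← hqs]; exact hconj
    have hp' := congrArg conj hp
    have hsp' := congrArg conj hsp
    simp only [map_mul, map_add, map_div₀, map_neg, map_ofNat, Complex.conj_conj] at hp' hsp'
    linear_combination (-15 / 11) * (hp - hp') + (15 / 11) * (hsp' - hsp)
  have hq_real : conj q = q := by
    simp only [hqs, map_add, map_div₀, map_ofNat, hs_real]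
  have hq_sq : q * q = 1 := by
    rw [← Complex.conj_mul_self_of_norm_eq_one hq, hq_real]
  have hs : s = 3 * q - 4 / 5 := by linear_combination -3 * hqs
  rw [hs_real] at hconj
  have hq_val : q = -14 / 11 := by
    linear_combination (5 / 11) * (hsp + hconj - 3 * hq_sq - (1 + q) * hs)
  rw [hq_val] at hq_sq
  norm_num at hq_sq

open Finset in
/-- There is no quadrature formula of degree 4 for the Bessel weight with 3 nodes
on `ℚ(√-1) ∩ S¹`. -/
theorem no_bessel_quadrature_deg4_three_nodes_on_QiS1 :
    ¬ ∃ (x z : Fin 3 → ℂ),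
      Function.Injective z ∧
      (∀ i, ∃ a b : ℚ, z i = (a : ℂ) + (b : ℂ) * Complex.I) ∧
      (∀ i, ‖z i‖ = 1) ∧
      (∀ j : ℕ, j ≤ 4 →
        ∑ i, x i * z i ^ j = (-2 : ℂ) ^ j / (Nat.factorial (j + 1) : ℂ)) := by
  rintro ⟨x, z, -, -, hnorm, hmom⟩
  have h₀ := Fin.sum_mul_pow_mul_nodePoly_eq_zero x z 0
  have h₁ := Fin.sum_mul_pow_mul_nodePoly_eq_zero x z 1
  simp (disch := norm_num) only [hmom] at h₀ h₁
  norm_num [Nat.factorial] at h₀ h₁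
  exact bessel_nodePoly_not_selfInversive (by linear_combination -h₀) (by linear_combination h₁)
    (Complex.conj_sum_mul_prod_of_norm_eq_one (hnorm 0) (hnorm 1) (hnorm 2))
    (by simp only [norm_mul, hnorm, mul_one])
end

section
/- There do not exist complex numbers x₁, x₂, x₃ and pairwise distinct complex numbers z₁, z₂, z₃, each with rational real and imaginary parts and of modulus 1, such that ∑_{i=1}^{3} x_i·z_i^j = (−2)^j/(j+1)! for every integer j with 0 ≤ j ≤ 3. (Equivalently: there is no quadrature formula of degree 3 for the Bessel weight with 3 nodes on ℚ(√−1) ∩ S¹.) -/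
/-!
A quadrature of degree 3 with nodes `z₀, z₁, z₂` annihilates the node polynomial, which gives one
linear relation between the elementary symmetric functions of the nodes. On the unit circle
`conj z = z⁻¹`, so conjugating that relation gives a second one. Together they fix the node
polynomial up to one parameter, and the discriminant of the two nodes other than `z := z₂` becomes
`((z₀ - z₁) (3z² + 7z + 5) / z)² = -(44a² + 84a + 43)` with `a = Re z`. The left side is the
square of a Gaussian rational and the right side is a negative rational, so `44a² + 84a + 43`
is a rational square. Together with `a² + b² = 1` this has no rational solution, as clearing
denominators and reducing mod 4 shows.
-/

open Complex ComplexConjugate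

def gaussianRationals : Subring ℂ where
  carrier := {z | ∃ a b : ℚ, z = a + b * I}
  mul_mem' := by
    rintro _ _ ⟨a, b, rfl⟩ ⟨c, d, rfl⟩
    exact ⟨a * c - b * d, a * d + b * c, by push_cast; linear_combination (b * d : ℂ) * I_sq⟩
  one_mem' := ⟨1, 0, by simp⟩
  add_mem' := by
    rintro _ _ ⟨a, b, rfl⟩ ⟨c, d, rfl⟩
    exact ⟨a + c, b + d, by push_cast; ring⟩
  zero_mem' := ⟨0, 0, by simp⟩
  neg_mem' := by
    rintro _ ⟨a, b, rfl⟩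
    exact ⟨-a, -b, by push_cast; ring⟩

lemma conj_mem_gaussianRationals {z : ℂ} (hz : z ∈ gaussianRationals) :
    conj z ∈ gaussianRationals := by
  obtain ⟨a, b, rfl⟩ := hz
  exact ⟨a, -b, by simp⟩

lemma exists_rat_sq_eq_of_sq_eq_neg {ζ : ℂ} (hζ : ζ ∈ gaussianRationals) {r : ℚ} (hr : 0 < r)
    (h : ζ ^ 2 = -r) : ∃ q : ℚ, q ^ 2 = r := by
  obtain ⟨c, d, rfl⟩ := hζ
  have hparts := Complex.ext_iff.mp h
  simp only [sq, mul_re, mul_im, add_re, add_im, ratCast_re, ratCast_im, I_re, I_im, neg_re,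
    neg_im, mul_zero, mul_one, sub_zero, add_zero, zero_add, neg_zero] at hparts
  norm_cast at hparts
  obtain ⟨hre, him⟩ := hparts
  rcases mul_eq_zero.mp (show c * d = 0 by linarith) with rfl | rfl
  · exact ⟨d, by linarith⟩
  · nlinarith [sq_nonneg c]

lemma rat_sq_add_sq_eq_one_of_norm_eq_one {a b : ℚ} (h : ‖(a : ℂ) + b * I‖ = 1) :
    a ^ 2 + b ^ 2 = 1 := by
  rw [← ofReal_ratCast, ← ofReal_ratCast, norm_add_mul_I, Real.sqrt_eq_one] at h
  exact_mod_cast h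

lemma two_mul_eq_zero_of_sq_add_sq_eq_sq_of_sq_eq : ∀ A B D C : ZMod 4,
    A ^ 2 + B ^ 2 = D ^ 2 → C ^ 2 = 44 * A ^ 2 + 84 * A * D + 43 * D ^ 2 →
    2 * A = 0 ∧ 2 * D = 0 := by
  decide

lemma Int.two_dvd_of_two_mul_cast_zmod_four_eq_zero {n : ℤ} (h : 2 * (n : ZMod 4) = 0) :
    2 ∣ n := by
  have : (4 : ℤ) ∣ 2 * n := (ZMod.intCast_zmod_eq_zero_iff_dvd _ 4).mp (by push_cast; exact h)
  omega

lemma Int.not_isCoprime_of_sq_add_sq_eq_sq_of_sq_eq {A B D C : ℤ} (hcirc : A ^ 2 + B ^ 2 = D ^ 2)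
    (hsq : C ^ 2 = 44 * A ^ 2 + 84 * A * D + 43 * D ^ 2) : ¬ IsCoprime A D := by
  intro hAD
  obtain ⟨hA, hD⟩ := two_mul_eq_zero_of_sq_add_sq_eq_sq_of_sq_eq A B D C
    (by exact_mod_cast congrArg (Int.cast : ℤ → ZMod 4) hcirc)
    (by exact_mod_cast congrArg (Int.cast : ℤ → ZMod 4) hsq)
  have := hAD.isUnit_of_dvd' (two_dvd_of_two_mul_cast_zmod_four_eq_zero hA)
    (two_dvd_of_two_mul_cast_zmod_four_eq_zero hD)
  norm_num [Int.isUnit_iff] at this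

lemma Rat.exists_int_sq_eq_of_sq_eq_intCast {q : ℚ} {n : ℤ} (h : q ^ 2 = n) :
    ∃ m : ℤ, n = m ^ 2 := by
  obtain ⟨m, hm⟩ := Rat.isSquare_intCast_iff.mp ⟨q, by rw [← h, sq]⟩
  exact ⟨m, by rw [hm, sq]⟩

lemma Rat.sq_ne_of_sq_add_sq_eq_one {a b : ℚ} (hcirc : a ^ 2 + b ^ 2 = 1) (q : ℚ) :
    q ^ 2 ≠ 44 * a ^ 2 + 84 * a + 43 := by
  intro hsq
  have ha : a = a.num / a.den := (Rat.num_div_den a).symm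
  obtain ⟨B, hB⟩ := exists_int_sq_eq_of_sq_eq_intCast (q := b * a.den)
    (n := a.den ^ 2 - a.num ^ 2) (by
      push_cast; rw [ha] at hcirc; field_simp at hcirc; linear_combination hcirc)
  obtain ⟨C, hC⟩ := exists_int_sq_eq_of_sq_eq_intCast (q := q * a.den)
    (n := 44 * a.num ^ 2 + 84 * a.num * a.den + 43 * a.den ^ 2) (by
      push_cast; rw [ha] at hsq; field_simp at hsq; linear_combination hsq)
  exact Int.not_isCoprime_of_sq_add_sq_eq_sq_of_sq_eq (B := B) (by linear_combination -hB)
    hC.symm a.isCoprime_num_den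

lemma node_relation_of_bessel_moments {x z : Fin 3 → ℂ}
    (hmom : ∀ j : ℕ, j ≤ 3 →
      ∑ i, x i * z i ^ j = (-2 : ℂ) ^ j / (Nat.factorial (j + 1) : ℂ)) :
    3 * (z 0 * z 1 * z 2) + 3 * (z 0 * z 1 + z 0 * z 2 + z 1 * z 2) + 2 * (z 0 + z 1 + z 2) + 1
      = 0 := by
  have h := fun j hj => (Fin.sum_univ_three (fun i => x i * z i ^ j)).symm.trans (hmom j hj)
  have h0 := h 0 (by norm_num)
  have h1 := h 1 (by norm_num)
  have h2 := h 2 (by norm_num)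
  have h3 := h 3 (by norm_num)
  norm_num [Nat.factorial] at h0 h1 h2 h3
  -- `∑ xᵢ (zᵢ - z₀)(zᵢ - z₁)(zᵢ - z₂) = 0`, expanded into moments
  linear_combination 3 * h3 - 3 * (z 0 + z 1 + z 2) * h2
    + 3 * (z 0 * z 1 + z 0 * z 2 + z 1 * z 2) * h1 - 3 * (z 0 * z 1 * z 2) * h0

section NodeRelations

variable {K : Type*} [Field K] {z₀ z₁ z₂ : K}

lemma reversed_node_relation (h₀ : z₀ ≠ 0) (h₁ : z₁ ≠ 0) (h₂ : z₂ ≠ 0)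
    (h : 3 * (z₀⁻¹ * z₁⁻¹ * z₂⁻¹) + 3 * (z₀⁻¹ * z₁⁻¹ + z₀⁻¹ * z₂⁻¹ + z₁⁻¹ * z₂⁻¹)
      + 2 * (z₀⁻¹ + z₁⁻¹ + z₂⁻¹) + 1 = 0) :
    z₀ * z₁ * z₂ + 2 * (z₀ * z₁ + z₀ * z₂ + z₁ * z₂) + 3 * (z₀ + z₁ + z₂) + 3 = 0 := by
  field_simp at h
  linear_combination h

lemma sq_sub_mul_eq_of_node_relations [CharZero K]
    (h : 3 * (z₀ * z₁ * z₂) + 3 * (z₀ * z₁ + z₀ * z₂ + z₁ * z₂) + 2 * (z₀ + z₁ + z₂) + 1 = 0)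
    (h' : z₀ * z₁ * z₂ + 2 * (z₀ * z₁ + z₀ * z₂ + z₁ * z₂) + 3 * (z₀ + z₁ + z₂) + 3 = 0) :
    ((z₀ - z₁) * (3 * z₂ ^ 2 + 7 * z₂ + 5)) ^ 2
      = -(11 * z₂ ^ 4 + 42 * z₂ ^ 3 + 65 * z₂ ^ 2 + 42 * z₂ + 11) := by
  have hsum : (z₀ + z₁) * (3 * z₂ ^ 2 + 7 * z₂ + 5) = -(7 * z₂ ^ 2 + 13 * z₂ + 7) := by
    linear_combination (3 * z₂ + 3) * h' - (z₂ + 2) * h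
  have hprod : z₀ * z₁ * (3 * z₂ ^ 2 + 7 * z₂ + 5) = 5 * z₂ ^ 2 + 7 * z₂ + 3 := by
    linear_combination ((3 * z₂ ^ 2 + 7 * z₂ + 5) * (3 * h' - h) - (3 * z₂ + 7) * hsum) / 3
  linear_combination ((z₀ + z₁) * (3 * z₂ ^ 2 + 7 * z₂ + 5) - (7 * z₂ ^ 2 + 13 * z₂ + 7)) * hsum
    - 4 * (3 * z₂ ^ 2 + 7 * z₂ + 5) * hprod

end NodeRelations

lemma palindromic_mul_sq_eq_of_mul_eq_one {R : Type*} [CommRing R] {z w : R} (h : z * w = 1) :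
    (11 * z ^ 4 + 42 * z ^ 3 + 65 * z ^ 2 + 42 * z + 11) * w ^ 2
      = 11 * (z + w) ^ 2 + 42 * (z + w) + 43 := by
  linear_combination
    (11 * z ^ 3 * w + 42 * z ^ 2 * w + 11 * z ^ 2 + 65 * z * w + 42 * z + 42 * w + 43) * h

open Finset in
/-- There is no quadrature formula of degree 3 for the Bessel weight with 3 nodes
on `ℚ(√-1) ∩ S¹`. -/
theorem no_bessel_quadrature_deg3_three_nodes_on_QiS1 :
    ¬ ∃ (x z : Fin 3 → ℂ),
      Function.Injective z ∧
      (∀ i, ∃ a b : ℚ, z i = (a : ℂ) + (b : ℂ) * Complex.I) ∧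
      (∀ i, ‖z i‖ = 1) ∧
      (∀ j : ℕ, j ≤ 3 →
        ∑ i, x i * z i ^ j = (-2 : ℂ) ^ j / (Nat.factorial (j + 1) : ℂ)) := by
  rintro ⟨x, z, -, hrat, hnorm, hmom⟩
  have hne : ∀ i, z i ≠ 0 := fun i h => by simpa [h] using hnorm i
  have hconj : ∀ i, conj (z i) = (z i)⁻¹ := fun i => (inv_eq_conj (hnorm i)).symm
  have hE := node_relation_of_bessel_moments hmom
  have hE' := reversed_node_relation (hne 0) (hne 1) (hne 2) (by
    simpa [hconj, map_ofNat] using congrArg conj hE)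
  obtain ⟨a, b, hz⟩ := hrat 2
  have hre : z 2 + conj (z 2) = 2 * (a : ℂ) := by rw [add_conj, hz]; simp
  have hζ : ((z 0 - z 1) * (3 * z 2 ^ 2 + 7 * z 2 + 5) * conj (z 2)) ^ 2
      = -((44 * a ^ 2 + 84 * a + 43 : ℚ) : ℂ) := by
    rw [mul_pow, sq_sub_mul_eq_of_node_relations hE hE', neg_mul,
      palindromic_mul_sq_eq_of_mul_eq_one (by rw [hconj, mul_inv_cancel₀ (hne 2)]), hre]
    push_cast; ring
  have hmem : (z 0 - z 1) * (3 * z 2 ^ 2 + 7 * z 2 + 5) * conj (z 2) ∈ gaussianRationals := by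
    have h₀ : z 0 ∈ gaussianRationals := hrat 0
    have h₁ : z 1 ∈ gaussianRationals := hrat 1
    have h₂ : z 2 ∈ gaussianRationals := hrat 2
    have := conj_mem_gaussianRationals h₂
    aesop
  obtain ⟨q, hq⟩ := exists_rat_sq_eq_of_sq_eq_neg hmem (by nlinarith [sq_nonneg (22 * a + 21)]) hζ
  exact Rat.sq_ne_of_sq_add_sq_eq_one (rat_sq_add_sq_eq_one_of_norm_eq_one (hz ▸ hnorm 2)) q hq
end

section
/- For every integer r ≥ 0, there exist pairwise distinct rational numbers q₁,…,q_{r+1} and complex numbers x₁,…,x_{r+1} such that ∑_{i=1}^{r+1} x_i·q_i^j = (−2)^j/(j+1)! for every integer j with 0 ≤ j ≤ r+1. (Equivalently: there exists a quadrature formula of degree r+1 for the Bessel weight with r+1 nodes on ℚ.) -/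
/-!
The Lagrange weights `L (ℓᵢ)` at `n + 1` distinct nodes `qᵢ` integrate every polynomial of
degree `≤ n` exactly, and also degree `n + 1` as soon as `L` kills `∏ (X - qᵢ)`. To find such
nodes, fix distinct nonzero `c₁, …, cₙ`, scale them by `a`, and solve the affine equation
`L ((X - t) * ∏ (X - a cᵢ)) = 0` for `t`. If `p(0) ≠ 0`, then `a ↦ L (p.scaleRoots a)` is a
polynomial in `a` with top coefficient `p(0) * L 1 ≠ 0`; so for all but finitely many `a` the
equation has a solution `t`, and `t` differs from every `a cᵢ`.
-/
open Polynomial Finset Function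

theorem exists_injective_ne_zero (K : Type*) [Zero K] [Infinite K] (n : ℕ) :
    ∃ c : Fin n → K, Injective c ∧ ∀ i, c i ≠ 0 := by
  have h : ({0}ᶜ : Set K).Infinite := (Set.finite_singleton 0).infinite_compl
  exact ⟨fun i => h.natEmbedding _ i, fun i j hij => Fin.ext <| (h.natEmbedding _).injective <|
    Subtype.ext hij, fun i => (h.natEmbedding _ i).2⟩

namespace Polynomial

section ScaleRoots

variable {R : Type*} [CommRing R] [NoZeroDivisors R]

theorem multiset_prod_X_sub_C_scaleRoots (s : Multiset R) (a : R) :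
    (s.map fun c => X - C c).prod.scaleRoots a = (s.map fun c => X - C (c * a)).prod := by
  induction s using Multiset.induction_on with
  | empty => simp
  | cons c s ih => simp [mul_scaleRoots_of_noZeroDivisors, ih]

end ScaleRoots

variable {K : Type*} [Field K] (L : K[X] →ₗ[K] K)

section Quadrature

variable {ι : Type*} [DecidableEq ι] {s : Finset ι} {v : ι → K}

theorem sum_map_basis_mul_eval_of_degree_lt (hv : Set.InjOn v s) {p : K[X]}
    (hp : p.degree < #s) : ∑ i ∈ s, L (Lagrange.basis s v i) * p.eval (v i) = L p := by
  conv_rhs => rw [Lagrange.eq_interpolate hv hp, Lagrange.interpolate_apply]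
  rw [map_sum]
  exact sum_congr rfl fun i _ => by rw [← smul_eq_C_mul, map_smul, smul_eq_mul, mul_comm]

theorem sum_map_basis_mul_eval_of_natDegree_le (hv : Set.InjOn v s)
    (hL : L (Lagrange.nodal s v) = 0) {p : K[X]} (hp : p.natDegree ≤ #s) :
    ∑ i ∈ s, L (Lagrange.basis s v i) * p.eval (v i) = L p := by
  set N := Lagrange.nodal s v
  have hN : N.Monic := Lagrange.nodal_monic
  obtain ⟨c, hc⟩ : ∃ c, p /ₘ N = C c := ⟨_, eq_C_of_natDegree_eq_zero <| by
    rw [natDegree_divByMonic _ hN, Lagrange.natDegree_nodal]; omega⟩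
  have hp' : p %ₘ N + C c * N = p := by rw [← hc, mul_comm]; exact modByMonic_add_div p N
  calc ∑ i ∈ s, L (Lagrange.basis s v i) * p.eval (v i)
      = ∑ i ∈ s, L (Lagrange.basis s v i) * (p %ₘ N).eval (v i) :=
        sum_congr rfl fun i hi => by
          rw [← hp', eval_add, eval_mul, Lagrange.eval_nodal_at_node hi, mul_zero, add_zero,
            hp']
    _ = L (p %ₘ N) := sum_map_basis_mul_eval_of_degree_lt L hv <| by
          simpa only [N, Lagrange.degree_nodal] using degree_modByMonic_lt p hN
    _ = L p := by
          conv_rhs => rw [← hp']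
          rw [map_add, ← smul_eq_C_mul, map_smul, hL, smul_zero, add_zero]

theorem exists_weights_of_map_prod_X_sub_C_eq_zero {n : ℕ} {q : Fin n → K} (hq : Injective q)
    (hL : L (∏ i, (X - C (q i))) = 0) :
    ∃ w : Fin n → K, ∀ j ≤ n, ∑ i, w i * q i ^ j = L (X ^ j) := by
  refine ⟨fun i => L (Lagrange.basis univ q i), fun j hj => ?_⟩
  simpa using sum_map_basis_mul_eval_of_natDegree_le L hq.injOn hL (p := X ^ j)
    (by simpa using hj)

end Quadrature

theorem finite_setOf_map_scaleRoots_eq_zero (hL : L 1 ≠ 0) {p : K[X]} (hp : p.coeff 0 ≠ 0) :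
    {a | L (p.scaleRoots a) = 0}.Finite := by
  set d := p.natDegree
  set g : K[X] := ∑ k ∈ range (d + 1), C (p.coeff k * L (X ^ k)) * X ^ (d - k)
  have hg : ∀ a, L (p.scaleRoots a) = g.eval a := fun a => by
    conv_lhs => rw [as_sum_range_C_mul_X_pow (p.scaleRoots a), natDegree_scaleRoots]
    simp only [map_sum, ← smul_eq_C_mul, map_smul, coeff_scaleRoots, smul_eq_mul]
    simp only [g, eval_finsetSum, eval_mul, eval_C, eval_pow, eval_X]
    exact sum_congr rfl fun k _ => by ring
  have hgd : g.coeff d = p.coeff 0 * L 1 := by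
    simp only [g, finsetSum_coeff, coeff_C_mul_X_pow]
    rw [sum_eq_single 0 (fun k hk hk0 => if_neg (by simp at hk; omega)) (by simp)]
    simp
  have hg0 : g ≠ 0 := fun h => mul_ne_zero hp hL (by rw [← hgd, h, coeff_zero])
  exact (finite_setOfPred_isRoot hg0).subset fun a ha => by simpa [IsRoot, ← hg] using ha

theorem finite_setOf_map_multiset_prod_X_sub_C_mul_eq_zero (hL : L 1 ≠ 0) {s : Multiset K}
    (hs : 0 ∉ s) : {a | L (s.map fun c => X - C (c * a)).prod = 0}.Finite := by
  simp_rw [← multiset_prod_X_sub_C_scaleRoots]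
  refine finite_setOf_map_scaleRoots_eq_zero L hL ?_
  rw [coeff_zero_eq_eval_zero, eval_multiset_prod, Multiset.map_map]
  exact Multiset.prod_ne_zero (by simpa [comp_def, eq_comm] using hs)

theorem exists_injective_map_prod_X_sub_C_eq_zero [Infinite K] (hL : L 1 ≠ 0) (n : ℕ) :
    ∃ q : Fin (n + 1) → K, Injective q ∧ L (∏ i, (X - C (q i))) = 0 := by
  obtain ⟨c, hc, hc0⟩ := exists_injective_ne_zero K n
  set s : Multiset K := univ.val.map c
  have hs : 0 ∉ s := by simpa [s, eq_comm] using hc0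
  set Q : K → K[X] := fun a => (s.map fun x => X - C (x * a)).prod
  have hQ : ∀ a, Q a = ∏ i, (X - C (c i * a)) := fun a => by
    simp only [Q, s, Multiset.map_map, comp_def, prod_eq_multiset_prod]
  have hbad :
      ({0} ∪ {a | L (Q a) = 0} ∪ ⋃ i, {a | L ((X - C (c i * a)) * Q a) = 0}).Finite := by
    refine ((Set.finite_singleton 0).union ?_).union (Set.finite_iUnion fun i => ?_)
    · exact finite_setOf_map_multiset_prod_X_sub_C_mul_eq_zero L hL hs
    · simpa [Q] using finite_setOf_map_multiset_prod_X_sub_C_mul_eq_zero L hL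
        (s := c i ::ₘ s) (by simp [hs, hc0 i, eq_comm])
  obtain ⟨a, ha⟩ := hbad.exists_notMem
  simp only [Set.mem_union, Set.mem_singleton_iff, Set.mem_ofPred_eq, Set.mem_iUnion, not_or,
    not_exists] at ha
  obtain ⟨⟨ha0, hQa⟩, hQi⟩ := ha
  set t := L (X * Q a) / L (Q a)
  have ht : ∀ u, L ((X - C u) * Q a) = 0 ↔ u = t := fun u => by
    rw [sub_mul, map_sub, ← smul_eq_C_mul, map_smul, smul_eq_mul, sub_eq_zero, eq_div_iff hQa,
      eq_comm]
  refine ⟨Fin.cons t fun i => c i * a, Fin.cons_injective_iff.2 ⟨?_, ?_⟩, ?_⟩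
  · rintro ⟨i, hi⟩
    exact hQi i ((ht _).2 hi)
  · exact fun i j hij => hc (mul_right_cancel₀ ha0 hij)
  · rw [Fin.prod_univ_succ, Fin.cons_zero]
    simpa only [Fin.cons_succ, ← hQ] using (ht t).2 rfl

theorem exists_quadrature [Infinite K] (hL : L 1 ≠ 0) (n : ℕ) :
    ∃ (q : Fin (n + 1) → K) (w : Fin (n + 1) → K),
      Injective q ∧ ∀ j ≤ n + 1, ∑ i, w i * q i ^ j = L (X ^ j) := by
  obtain ⟨q, hq, hLq⟩ := exists_injective_map_prod_X_sub_C_eq_zero L hL n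
  obtain ⟨w, hw⟩ := exists_weights_of_map_prod_X_sub_C_eq_zero L hq hLq
  exact ⟨q, w, hq, hw⟩

end Polynomial

open Nat in
noncomputable def besselMomentFunctional : ℚ[X] →ₗ[ℚ] ℚ :=
  Polynomial.lsum fun j => ((-2 : ℚ) ^ j / (j + 1)!) • LinearMap.id

open Nat in
theorem besselMomentFunctional_X_pow (j : ℕ) :
    besselMomentFunctional (X ^ j) = (-2 : ℚ) ^ j / (j + 1)! := by
  simp [besselMomentFunctional, X_pow_eq_monomial]

open Finset in
/-- For every `r ≥ 0` there is a quadrature formula of degree `r + 1` for the Bessel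
weight with `r + 1` nodes on `ℚ`. -/
theorem exists_bessel_quadrature_deg_r_add_one_on_Q (r : ℕ) :
    ∃ (q : Fin (r + 1) → ℚ) (x : Fin (r + 1) → ℂ),
      Function.Injective q ∧
      (∀ j : ℕ, j ≤ r + 1 →
        ∑ i, x i * (q i : ℂ) ^ j = (-2 : ℂ) ^ j / (Nat.factorial (j + 1) : ℂ)) := by
  obtain ⟨q, w, hq, hw⟩ := exists_quadrature besselMomentFunctional
    (by rw [← pow_zero X, besselMomentFunctional_X_pow]; norm_num) r
  refine ⟨q, fun i => w i, hq, fun j hj => ?_⟩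
  have h := congrArg (Rat.cast : ℚ → ℂ) (hw j hj)
  rw [besselMomentFunctional_X_pow] at h
  push_cast at h
  exact h
end

section
/- (Riesz–Shohat theorem, complex version.) Let L be a moment functional on ℂ[X] admitting a family (φ_l)_{l≥0} of monic orthogonal polynomials. Let r ≥ 0, let k be an integer with 1 ≤ k ≤ r+2, let z₁,…,z_{r+1} ∈ ℂ be pairwise distinct, and set θ_{r+1}(X) = ∏_{i=1}^{r+1}(X − z_i). Then the following are equivalent: (1) there exist x₁,…,x_{r+1} ∈ ℂ such that ∑_{i=1}^{r+1} x_i f(z_i) = L(f) for every polynomial f ∈ ℂ[X] with deg f ≤ 2(r+1) − k; (2) there exist b₁,…,b_{k−1} ∈ ℂ such that θ_{r+1} = φ_{r+1} + b₁ φ_r + ⋯ + b_{k−1} φ_{r+2−k}. -/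
/-!
Both conditions say that `L (q * θ) = 0` for every `q` of degree `< r + 2 - k`.
Dividing `f` by `θ`, the interpolatory weights `L ℓᵢ` (with `ℓᵢ` the Lagrange basis) integrate
the remainder exactly, so a quadrature of degree `d` exists iff `L` kills the multiples of `θ`
of degree `≤ d`. On the other side, writing `θ - φ_{r+1} = ∑_{m ≤ r} c_m φ_m`, orthogonality gives
`L (θ φ_m) = c_m L (φ_m ^ 2)`, so `θ` is orthogonal to `φ_m` exactly when `c_m = 0`.
-/

open Polynomial Finset Submodule

theorem Set.range_sub_fin_eq_Ico {s n : ℕ} (hs : s ≤ n + 1) :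
    Set.range (fun j : Fin s => n - (j : ℕ)) = Set.Ico (n + 1 - s) (n + 1) := by
  ext m
  simp only [Set.mem_range, Set.mem_Ico]
  constructor
  · rintro ⟨j, rfl⟩
    omega
  · intro hm
    exact ⟨⟨n - m, by omega⟩, by simp only; omega⟩

section

variable {R : Type*} [CommRing R] {L : R[X] →ₗ[R] R}

theorem Polynomial.Monic.forall_dvd_natDegree_le_iff [Nontrivial R] {θ : R[X]} (hθ : θ.Monic)
    (d : ℕ) :
    (∀ g : R[X], θ ∣ g → g.natDegree ≤ d → L g = 0) ↔
      ∀ q : R[X], q.degree < ↑(d + 1 - θ.natDegree) → L (q * θ) = 0 := by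
  have hdeg : ∀ q : R[X], (θ * q).natDegree ≤ d ↔ q.degree < ↑(d + 1 - θ.natDegree) := by
    intro q
    rcases eq_or_ne q 0 with rfl | hq
    · simp
    · rw [hθ.natDegree_mul' hq, ← natDegree_lt_iff_degree_lt hq]
      omega
  constructor
  · intro h q hq
    exact h _ (dvd_mul_left _ _) (mul_comm q θ ▸ (hdeg q).2 hq)
  · rintro h _ ⟨q, rfl⟩ hg
    exact mul_comm q θ ▸ h q ((hdeg q).1 hg)

variable {φ : ℕ → R[X]}

theorem span_image_Iio_eq_degreeLT [Nontrivial R] (hmonic : ∀ l, (φ l).Monic)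
    (hdeg : ∀ l, (φ l).natDegree = l) (n : ℕ) :
    span R (φ '' Set.Iio n) = degreeLT R n :=
  Sequence.span_degreeLT ⟨φ, fun l => by rw [degree_eq_natDegree (hmonic l).ne_zero, hdeg]⟩
    fun i _ => by simp [(hmonic i).leadingCoeff]

theorem map_mul_eq_zero_of_degree_lt [Nontrivial R] (hmonic : ∀ l, (φ l).Monic)
    (hdeg : ∀ l, (φ l).natDegree = l) (horth : ∀ l m, l ≠ m → L (φ l * φ m) = 0)
    {q : R[X]} {m : ℕ} (hq : q.degree < m) : L (q * φ m) = 0 := by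
  have : degreeLT R m ≤ LinearMap.ker (L ∘ₗ LinearMap.mulRight R (φ m)) := by
    rw [← span_image_Iio_eq_degreeLT hmonic hdeg, span_le]
    rintro _ ⟨l, hl, rfl⟩
    exact horth l m (ne_of_lt hl)
  exact this (mem_degreeLT.2 hq)

theorem map_mul_sum_smul (horth : ∀ l m, l ≠ m → L (φ l * φ m) = 0) (c : ℕ → R)
    {j n : ℕ} (hj : j < n) : L (φ j * ∑ m ∈ range n, c m • φ m) = c j * L (φ j ^ 2) := by
  rw [mul_sum, map_sum, sum_eq_single_of_mem j (mem_range.2 hj)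
    fun m _ hm => by rw [mul_smul_comm, map_smul, horth j m hm.symm, smul_zero]]
  rw [mul_smul_comm, map_smul, smul_eq_mul, sq]

theorem mem_span_image_Ico_iff [IsDomain R] (hmonic : ∀ l, (φ l).Monic)
    (hdeg : ∀ l, (φ l).natDegree = l) (horth : ∀ l m, l ≠ m → L (φ l * φ m) = 0)
    (hnonzero : ∀ l, L (φ l ^ 2) ≠ 0) {t n : ℕ} {p : R[X]} (hp : p.degree < n) :
    p ∈ span R (φ '' Set.Ico t n) ↔ ∀ q : R[X], q.degree < t → L (q * p) = 0 := by
  constructor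
  · intro hspan q hq
    clear hp
    induction hspan using span_induction with
    | mem _ hx =>
      obtain ⟨m, hm, rfl⟩ := hx
      exact map_mul_eq_zero_of_degree_lt hmonic hdeg horth (hq.trans_le (by exact_mod_cast hm.1))
    | zero => rw [mul_zero, map_zero]
    | add _ _ _ _ hx hy => rw [mul_add, map_add, hx, hy, add_zero]
    | smul a _ _ hx => rw [mul_smul_comm, map_smul, hx, smul_zero]
  · intro hp_orth
    rw [← mem_degreeLT, ← span_image_Iio_eq_degreeLT hmonic hdeg, ← coe_range,
      mem_span_image_finset_iff_exists_fun'] at hp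
    obtain ⟨c, rfl⟩ := hp
    have hc : ∀ m < t, m < n → c m = 0 := by
      intro m hmt hmn
      have hφm : (φ m).degree < t := by
        rw [degree_eq_natDegree (hmonic m).ne_zero, hdeg]
        exact_mod_cast hmt
      have h := (map_mul_sum_smul horth c hmn).symm.trans (hp_orth _ hφm)
      exact (mul_eq_zero.1 h).resolve_right (hnonzero m)
    rw [← coe_Ico, mem_span_image_finset_iff_exists_fun']
    refine ⟨c, sum_subset (fun m hm => mem_range.2 (mem_Ico.1 hm).2) fun m hm hmt => ?_⟩
    rw [mem_Ico, not_and', not_le] at hmt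
    rw [hc m (hmt (mem_range.1 hm)) (mem_range.1 hm), zero_smul]

theorem forall_map_mul_eq_zero_iff_exists_eq_add_sum [IsDomain R]
    (hmonic : ∀ l, (φ l).Monic) (hdeg : ∀ l, (φ l).natDegree = l)
    (horth : ∀ l m, l ≠ m → L (φ l * φ m) = 0) (hnonzero : ∀ l, L (φ l ^ 2) ≠ 0)
    {θ : R[X]} (hθ : θ.Monic) {n s : ℕ} (hθdeg : θ.natDegree = n + 1) (hs : s ≤ n + 1) :
    (∀ q : R[X], q.degree < ↑(n + 1 - s) → L (q * θ) = 0) ↔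
      ∃ b : Fin s → R, θ = φ (n + 1) + ∑ j, b j • φ (n - j) := by
  have hdiff : (θ - φ (n + 1)).degree < ↑(n + 1) := by
    have hθdeg' : θ.degree = ↑(n + 1) := by rw [degree_eq_natDegree hθ.ne_zero, hθdeg]
    exact hθdeg' ▸ degree_sub_lt_left (by rw [hθdeg', degree_eq_natDegree (hmonic _).ne_zero, hdeg])
      hθ.ne_zero (by rw [hθ.leadingCoeff, (hmonic _).leadingCoeff])
  calc (∀ q : R[X], q.degree < ↑(n + 1 - s) → L (q * θ) = 0)
      ↔ ∀ q : R[X], q.degree < ↑(n + 1 - s) → L (q * (θ - φ (n + 1))) = 0 := by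
        refine forall₂_congr fun q hq => ?_
        rw [mul_sub, map_sub, map_mul_eq_zero_of_degree_lt hmonic hdeg horth
          (hq.trans_le (by exact_mod_cast Nat.sub_le _ _)), sub_zero]
    _ ↔ θ - φ (n + 1) ∈ span R (φ '' Set.Ico (n + 1 - s) (n + 1)) :=
        (mem_span_image_Ico_iff hmonic hdeg horth hnonzero hdiff).symm
    _ ↔ ∃ b : Fin s → R, ∑ j, b j • φ (n - j) = θ - φ (n + 1) := by
        rw [← Set.range_sub_fin_eq_Ico hs, ← Set.range_comp, mem_span_range_iff_exists_fun]
        rfl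
    _ ↔ ∃ b : Fin s → R, θ = φ (n + 1) + ∑ j, b j • φ (n - j) :=
        exists_congr fun b => by rw [eq_comm, sub_eq_iff_eq_add']

end

section

variable {K ι : Type*} [Field K] [Fintype ι] [DecidableEq ι] (L : K[X] →ₗ[K] K) {z : ι → K}

theorem map_eq_sum_map_basis_mul_eval (hz : Function.Injective z) {f : K[X]}
    (hf : f.degree < Fintype.card ι) :
    L f = ∑ i, L (Lagrange.basis univ z i) * f.eval (z i) := by
  conv_lhs => rw [Lagrange.eq_interpolate (f := f) hz.injOn (by rwa [card_univ])]
  rw [Lagrange.interpolate_apply, map_sum]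
  refine sum_congr rfl fun i _ => ?_
  rw [← smul_eq_C_mul, map_smul, smul_eq_mul, mul_comm]

theorem exists_quadrature_iff (hz : Function.Injective z) (d : ℕ) :
    (∃ x : ι → K, ∀ f : K[X], f.natDegree ≤ d → ∑ i, x i * f.eval (z i) = L f) ↔
      ∀ g : K[X], Lagrange.nodal univ z ∣ g → g.natDegree ≤ d → L g = 0 := by
  constructor
  · rintro ⟨x, hx⟩ _ ⟨q, rfl⟩ hdeg
    rw [← hx _ hdeg]
    exact sum_eq_zero fun i _ => by
      rw [eval_mul, Lagrange.eval_nodal_at_node (mem_univ i), zero_mul, mul_zero]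
  · intro hvanish
    refine ⟨fun i => L (Lagrange.basis univ z i), fun f hf => ?_⟩
    have hθ : (Lagrange.nodal univ z).Monic := Lagrange.nodal_monic
    have hθdeg : (Lagrange.nodal univ z).degree = Fintype.card ι := by
      rw [Lagrange.degree_nodal, card_univ]
    set θ := Lagrange.nodal univ z
    have hnode : ∀ i, (f %ₘ θ).eval (z i) = f.eval (z i) := fun i => by
      conv_rhs => rw [← modByMonic_add_div f θ]
      rw [eval_add, eval_mul, Lagrange.eval_nodal_at_node (mem_univ i), zero_mul, add_zero]
    have hquot : L (θ * (f /ₘ θ)) = 0 := by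
      refine hvanish _ (dvd_mul_right _ _) ?_
      rw [eq_sub_of_add_eq' (modByMonic_add_div f θ)]
      exact (natDegree_sub_le _ _).trans (max_le le_rfl natDegree_modByMonic_le_left) |>.trans hf
    have hrem : (f %ₘ θ).degree < Fintype.card ι := hθdeg ▸ degree_modByMonic_lt f hθ
    calc ∑ i, L (Lagrange.basis univ z i) * f.eval (z i)
        = ∑ i, L (Lagrange.basis univ z i) * (f %ₘ θ).eval (z i) := by simp only [hnode]
      _ = L (f %ₘ θ) := (map_eq_sum_map_basis_mul_eval L hz hrem).symm
      _ = L f := by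
        conv_rhs => rw [← modByMonic_add_div f θ]
        rw [map_add, hquot, add_zero]

end

open Polynomial Finset in
/-- The Riesz–Shohat theorem over `ℂ`: for a moment functional `L` with monic orthogonal
polynomials `φ`, pairwise distinct nodes `z₁, …, z_{r+1}` admit weights giving a quadrature
formula of degree `2(r+1) - k` if and only if `θ_{r+1} = ∏ (X - z_i)` is quasi-orthogonal
of degree `r + 1` and order `k - 1`. -/
theorem riesz_shohat (L : Polynomial ℂ →ₗ[ℂ] ℂ) (φ : ℕ → Polynomial ℂ)
    (hmonic : ∀ l, (φ l).Monic) (hdeg : ∀ l, (φ l).natDegree = l)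
    (horth : ∀ l m, l ≠ m → L (φ l * φ m) = 0)
    (hnonzero : ∀ l, L (φ l ^ 2) ≠ 0)
    (r k : ℕ) (hk1 : 1 ≤ k) (hk2 : k ≤ r + 2)
    (z : Fin (r + 1) → ℂ) (hz : Function.Injective z) :
    (∃ x : Fin (r + 1) → ℂ, ∀ f : Polynomial ℂ, f.natDegree ≤ 2 * (r + 1) - k →
        ∑ i, x i * f.eval (z i) = L f) ↔
    (∃ b : Fin (k - 1) → ℂ,
        ∏ i, (X - C (z i)) = φ (r + 1) + ∑ j : Fin (k - 1), b j • φ (r - (j : ℕ))) := by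
  have hθ : (Lagrange.nodal univ z).Monic := Lagrange.nodal_monic
  have hθdeg : (Lagrange.nodal univ z).natDegree = r + 1 := by
    rw [Lagrange.natDegree_nodal, card_univ, Fintype.card_fin]
  rw [← Lagrange.nodal_eq, exists_quadrature_iff L hz, hθ.forall_dvd_natDegree_le_iff, hθdeg,
    show 2 * (r + 1) - k + 1 - (r + 1) = r + 1 - (k - 1) by omega]
  exact forall_map_mul_eq_zero_iff_exists_eq_add_sum hmonic hdeg horth hnonzero hθ hθdeg
    (by omega)
end

section
/- (Newton polygon lemma.) Let K be a field equipped with a discrete additive valuation v : K → ℤ ∪ {∞} (with v(0) = ∞ and v(K^×) ⊆ ℤ). Let f(X) = ∑_{k=0}^{n} a_k X^{n−k} ∈ K[X] with a_0 ≠ 0 and v(a_k) ≥ 0 for all k, and suppose all zeros of f lie in K (i.e., f splits into linear factors over K, counted with multiplicity). Suppose 0 ≤ i < j ≤ n are indices with a_i ≠ 0 and a_j ≠ 0 such that for every k with 0 ≤ k ≤ n one has (j−i)·v(a_k) ≥ (j−k)·v(a_i) + (k−i)·v(a_j), with strict inequality whenever k < i or k > j (interpreting the inequality as holding when a_k = 0).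 Then (j−i) divides v(a_j) − v(a_i); that is, the slope of this edge of the Newton polygon of f is an integer. -/
/-!
Tilt the valuation by the slope `(m j - m i) / (j - i)`: weigh the coefficient of `X ^ e` by
`(j - i) • v + e • (m j - m i)`. If the minimal weight of each of two polynomials is attained at a
single exponent, the same holds for their product, because the product of the two minimal terms
then strictly dominates its coefficient. A factor `X - c` has this property unless
`(j - i) • v c = m j - m i`, while the edge hypothesis says that the minimal weight of `f` is
attained at both `X ^ (n - i)` and `X ^ (n - j)`. Hence some root `c` satisfies
`(j - i) • v c = m j - m i`, and `j - i` divides `m j - m i`.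
-/

open Polynomial Finset

theorem nsmul_top_of_ne_zero {Γ : Type*} [LinearOrderedAddCommMonoidWithTop Γ] {d : ℕ}
    (hd : d ≠ 0) : d • (⊤ : Γ) = ⊤ := by
  obtain ⟨d, rfl⟩ := Nat.exists_eq_succ_of_ne_zero hd
  rw [succ_nsmul, add_top]

theorem dvd_of_nsmul_eq_coe {d : ℕ} (hd : d ≠ 0) {x : WithTop ℤ} {z : ℤ}
    (h : d • x = (z : WithTop ℤ)) : (d : ℤ) ∣ z := by
  lift x to ℤ with y
  · rintro rfl
    rw [nsmul_top_of_ne_zero hd] at h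
    exact WithTop.top_ne_coe h
  rw [← WithTop.coe_nsmul, WithTop.coe_inj, nsmul_eq_mul] at h
  exact ⟨y, h.symm⟩

namespace AddValuation

section nsmul

variable {R Γ : Type*} [Ring R] [LinearOrderedAddCommMonoidWithTop Γ]

def nsmul (v : AddValuation R Γ) (d : ℕ) (hd : d ≠ 0) : AddValuation R Γ :=
  v.map (nsmulAddMonoidHom d) (nsmul_top_of_ne_zero hd) (nsmul_right_mono d)

@[simp]
theorem nsmul_apply (v : AddValuation R Γ) {d : ℕ} (hd : d ≠ 0) (x : R) :
    v.nsmul d hd x = d • v x := rfl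

end nsmul

theorem lt_map_sum_add_coe {R G : Type*} [Ring R] [AddCommGroup G] [LinearOrder G]
    [IsOrderedAddMonoid G] (v : AddValuation R (WithTop G)) {ι : Type*} {s : Finset ι}
    {f : ι → R} {c : WithTop G} (hc : c ≠ ⊤) (g : G) (h : ∀ i ∈ s, c < v (f i) + g) :
    c < v (∑ i ∈ s, f i) + g := by
  lift c to G using hc
  have shift : ∀ x : WithTop G, (c : WithTop G) < x + g ↔ ((c - g : G) : WithTop G) < x := by
    intro x
    rw [← WithTop.add_lt_add_iff_right (WithTop.coe_ne_top (a := g)) (x := ((c - g : G) : _)),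
      ← WithTop.coe_add, sub_add_cancel]
  exact (shift _).mpr (v.map_lt_sum WithTop.coe_ne_top fun i hi => (shift _).mp (h i hi))

end AddValuation

namespace Polynomial

theorem coeff_sum_range_C_mul_X_pow_sub {S : Type*} [Semiring S] (a : ℕ → S) (n l : ℕ) :
    (∑ t ∈ range (n + 1), C (a t) * X ^ (n - t)).coeff l = if l ≤ n then a (n - l) else 0 := by
  simp only [finsetSum_coeff, coeff_C_mul_X_pow]
  split_ifs with hl
  · rw [sum_eq_single (n - l)]
    · simp [Nat.sub_sub_self hl]
    · intro k hk hkl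
      simp only [mem_range] at hk
      rw [if_neg (by omega)]
    · simp
  · exact sum_eq_zero fun k hk => if_neg (by simp only [mem_range] at hk; omega)

section Ring

variable {R G : Type*} [Ring R] [AddCommGroup G] [LinearOrder G] [IsOrderedAddMonoid G]

def tiltedVal (v : AddValuation R (WithTop G)) (γ : G) (p : R[X]) (e : ℕ) : WithTop G :=
  v (p.coeff e) + ((e • γ : G) : WithTop G)

def IsDominantCoeff (v : AddValuation R (WithTop G)) (γ : G) (p : R[X]) (e : ℕ) : Prop :=
  tiltedVal v γ p e ≠ ⊤ ∧ ∀ l ≠ e, tiltedVal v γ p e < tiltedVal v γ p l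

variable {v : AddValuation R (WithTop G)} {γ : G}

theorem tiltedVal_add_tiltedVal (v : AddValuation R (WithTop G)) (γ : G) (p q : R[X])
    (k l : ℕ) : tiltedVal v γ p k + tiltedVal v γ q l =
      v (p.coeff k * q.coeff l) + (((k + l) • γ : G) : WithTop G) := by
  rw [tiltedVal, tiltedVal, v.map_mul, add_smul, WithTop.coe_add, add_add_add_comm]

theorem IsDominantCoeff.le {p : R[X]} {e : ℕ} (hp : IsDominantCoeff v γ p e) (l : ℕ) :
    tiltedVal v γ p e ≤ tiltedVal v γ p l := by
  rcases eq_or_ne l e with rfl | hl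
  · exact le_rfl
  · exact (hp.2 l hl).le

theorem IsDominantCoeff.eq_of_forall_le {p : R[X]} {e k : ℕ} (hp : IsDominantCoeff v γ p e)
    (hk : ∀ l, tiltedVal v γ p k ≤ tiltedVal v γ p l) : k = e := by
  by_contra hke
  exact (hp.2 k hke).not_ge (hk e)

theorem IsDominantCoeff.add_lt_add {p q : R[X]} {e f : ℕ} (hp : IsDominantCoeff v γ p e)
    (hq : IsDominantCoeff v γ q f) {k l : ℕ} (hkl : (k, l) ≠ (e, f)) :
    tiltedVal v γ p e + tiltedVal v γ q f < tiltedVal v γ p k + tiltedVal v γ q l := by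
  rcases eq_or_ne k e with rfl | hk
  · have hl : l ≠ f := fun h => hkl (by rw [h])
    exact WithTop.add_lt_add_left hp.1 (hq.2 l hl)
  · exact WithTop.add_lt_add_of_lt_of_le hq.1 (hp.2 k hk) (hq.le l)

theorem IsDominantCoeff.mul {p q : R[X]} {e f : ℕ} (hp : IsDominantCoeff v γ p e)
    (hq : IsDominantCoeff v γ q f) : IsDominantCoeff v γ (p * q) (e + f) := by
  have hfin : tiltedVal v γ p e + tiltedVal v γ q f ≠ ⊤ := WithTop.add_ne_top.mpr ⟨hp.1, hq.1⟩
  have hterm : ∀ n (x : ℕ × ℕ), x.1 + x.2 = n → x ≠ (e, f) →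
      tiltedVal v γ p e + tiltedVal v γ q f < v (p.coeff x.1 * q.coeff x.2) + ((n • γ : G)) := by
    intro n x hx hxef
    rw [← hx, ← tiltedVal_add_tiltedVal]
    exact hp.add_lt_add hq hxef
  have hmain : tiltedVal v γ (p * q) (e + f) = tiltedVal v γ p e + tiltedVal v γ q f := by
    have hmem : (e, f) ∈ antidiagonal (e + f) := mem_antidiagonal.mpr rfl
    have hrest := v.lt_map_sum_add_coe hfin _ fun x hx =>
      hterm (e + f) x (mem_antidiagonal.mp (mem_of_mem_erase hx)) (ne_of_mem_erase hx)
    rw [tiltedVal_add_tiltedVal, WithTop.add_lt_add_iff_right WithTop.coe_ne_top] at hrest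
    rw [tiltedVal, coeff_mul, ← add_sum_erase _ _ hmem, v.map_add_eq_of_lt_left hrest,
      tiltedVal_add_tiltedVal]
  refine ⟨hmain ▸ hfin, fun n hn => ?_⟩
  rw [hmain, show tiltedVal v γ (p * q) n = v ((p * q).coeff n) + _ from rfl, coeff_mul]
  refine v.lt_map_sum_add_coe hfin _ fun x hx => hterm n x (mem_antidiagonal.mp hx) ?_
  rintro rfl
  exact hn (mem_antidiagonal.mp hx).symm

theorem isDominantCoeff_C {a : R} (ha : v a ≠ ⊤) : IsDominantCoeff v γ (C a) 0 := by
  refine ⟨by simpa [tiltedVal] using ha, fun l hl => ?_⟩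
  simpa [tiltedVal, coeff_C, hl] using ha.lt_top

theorem exists_isDominantCoeff_X_sub_C {c : R} (hc : v c ≠ γ) :
    ∃ e, IsDominantCoeff v γ (X - C c) e := by
  rcases hc.lt_or_gt with hlt | hgt
  · refine ⟨0, by simpa [tiltedVal] using hlt.ne_top, fun l hl => ?_⟩
    rcases l with _ | _ | l
    · exact absurd rfl hl
    · simpa [tiltedVal, coeff_X, coeff_C] using hlt
    · simpa [tiltedVal, coeff_X, coeff_C] using hlt.trans (WithTop.coe_lt_top _)
  · refine ⟨1, by simp [tiltedVal], fun l hl => ?_⟩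
    rcases l with _ | _ | l
    · simpa [tiltedVal, coeff_X, coeff_C] using hgt
    · exact absurd rfl hl
    · simp [tiltedVal, coeff_X]

theorem tiltedVal_sum_range_C_mul_X_pow_sub (v : AddValuation R (WithTop G)) (γ : G)
    (a : ℕ → R) {n k : ℕ} (hk : k ≤ n) :
    tiltedVal v γ (∑ t ∈ range (n + 1), C (a t) * X ^ (n - t)) (n - k) =
      v (a k) + (((n - k) • γ : G) : WithTop G) := by
  rw [tiltedVal, coeff_sum_range_C_mul_X_pow_sub, if_pos (Nat.sub_le n k), Nat.sub_sub_self hk]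

theorem le_tiltedVal_sum_range_C_mul_X_pow_sub {a : ℕ → R} {n : ℕ} {μ : WithTop G}
    (h : ∀ k ≤ n, a k ≠ 0 → μ ≤ v (a k) + (((n - k) • γ : G) : WithTop G)) (l : ℕ) :
    μ ≤ tiltedVal v γ (∑ t ∈ range (n + 1), C (a t) * X ^ (n - t)) l := by
  by_cases hl : l ≤ n ∧ a (n - l) ≠ 0
  · rw [← Nat.sub_sub_self hl.1, tiltedVal_sum_range_C_mul_X_pow_sub v γ a (Nat.sub_le n l)]
    exact h (n - l) (Nat.sub_le n l) hl.2
  · have hcoeff : (∑ t ∈ range (n + 1), C (a t) * X ^ (n - t)).coeff l = 0 := by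
      rw [coeff_sum_range_C_mul_X_pow_sub]
      split_ifs <;> tauto
    simp [tiltedVal, hcoeff]

end Ring

theorem exists_val_root_eq_of_two_minima {R G : Type*} [CommRing R] [AddCommGroup G]
    [LinearOrder G] [IsOrderedAddMonoid G] {v : AddValuation R (WithTop G)} {γ : G}
    {ι : Type*} {s : Finset ι} {b : R} {c : ι → R} (hb : v b ≠ ⊤) {e₁ e₂ : ℕ} (hne : e₁ ≠ e₂)
    (h₁ : ∀ l, tiltedVal v γ (C b * ∏ r ∈ s, (X - C (c r))) e₁ ≤
      tiltedVal v γ (C b * ∏ r ∈ s, (X - C (c r))) l)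
    (h₂ : ∀ l, tiltedVal v γ (C b * ∏ r ∈ s, (X - C (c r))) e₂ ≤
      tiltedVal v γ (C b * ∏ r ∈ s, (X - C (c r))) l) :
    ∃ r ∈ s, v (c r) = γ := by
  by_contra! hroots
  obtain ⟨e, hprod⟩ : ∃ e, IsDominantCoeff v γ (∏ r ∈ s, (X - C (c r))) e :=
    prod_induction _ (fun p => ∃ e, IsDominantCoeff v γ p e)
      (fun _ _ ⟨e, he⟩ ⟨e', he'⟩ => ⟨e + e', he.mul he'⟩)
      ⟨0, by simpa using isDominantCoeff_C (v := v) (γ := γ) (a := (1 : R)) (by simp)⟩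
      fun r hr => exists_isDominantCoeff_X_sub_C (hroots r hr)
  have hdom := (isDominantCoeff_C hb).mul hprod
  exact hne ((hdom.eq_of_forall_le h₁).trans (hdom.eq_of_forall_le h₂).symm)

end Polynomial

open Polynomial Finset in
theorem newton_polygon_integral_slope_general {K : Type*} [Field K]
    (v : AddValuation K (WithTop ℤ))
    (n : ℕ) (a : ℕ → K) (ha0 : a 0 ≠ 0)
    (m : ℕ → ℤ) (hm : ∀ k ≤ n, a k ≠ 0 → v (a k) = (m k : WithTop ℤ))
    (c : Fin n → K)
    (hsplit : ∑ k ∈ Finset.range (n + 1), C (a k) * X ^ (n - k)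
        = C (a 0) * ∏ i, (X - C (c i)))
    (i j : ℕ) (hij : i < j) (hjn : j ≤ n) (hai : a i ≠ 0) (haj : a j ≠ 0)
    (hedge : ∀ k ≤ n, a k ≠ 0 →
      ((j : ℤ) - (i : ℤ)) * m k ≥ ((j : ℤ) - (k : ℤ)) * m i + ((k : ℤ) - (i : ℤ)) * m j) :
    ((j : ℤ) - (i : ℤ)) ∣ (m j - m i) := by
  have hd : j - i ≠ 0 := by omega
  set w := v.nsmul (j - i) hd
  set f := ∑ k ∈ Finset.range (n + 1), C (a k) * X ^ (n - k)
  have hval : ∀ k ≤ n, a k ≠ 0 → w (a k) + (((n - k) • (m j - m i) : ℤ) : WithTop ℤ) =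
      (((j - i : ℕ) * m k + (n - k : ℕ) * (m j - m i) : ℤ) : WithTop ℤ) := by
    intro k hk hak
    rw [AddValuation.nsmul_apply, hm k hk hak, ← WithTop.coe_nsmul, ← WithTop.coe_add,
      nsmul_eq_mul, nsmul_eq_mul]
  have hmin : ∀ l, tiltedVal w (m j - m i) f (n - i) ≤ tiltedVal w (m j - m i) f l :=
    le_tiltedVal_sum_range_C_mul_X_pow_sub fun k hk hak => by
      rw [tiltedVal_sum_range_C_mul_X_pow_sub w _ a (by omega), hval i (by omega) hai,
        hval k hk hak, WithTop.coe_le_coe]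
      have := hedge k hk hak
      push_cast [hij.le, (hij.trans_le hjn).le, hk]
      linarith
  have htie : tiltedVal w (m j - m i) f (n - j) = tiltedVal w (m j - m i) f (n - i) := by
    rw [tiltedVal_sum_range_C_mul_X_pow_sub w _ a hjn,
      tiltedVal_sum_range_C_mul_X_pow_sub w _ a (by omega), hval j hjn haj,
      hval i (by omega) hai, WithTop.coe_inj]
    push_cast [hij.le, hjn, (hij.trans_le hjn).le]
    ring
  have hlead : w (a 0) ≠ ⊤ := by
    rw [AddValuation.nsmul_apply, hm 0 (Nat.zero_le n) ha0, ← WithTop.coe_nsmul]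
    exact WithTop.coe_ne_top
  rw [hsplit] at hmin htie
  obtain ⟨r, -, hr⟩ := exists_val_root_eq_of_two_minima hlead (by omega : n - j ≠ n - i)
    (htie ▸ hmin) hmin
  rw [AddValuation.nsmul_apply] at hr
  rw [← Nat.cast_sub hij.le]
  exact dvd_of_nsmul_eq_coe hd hr

open Polynomial Finset in
/-- Newton polygon lemma: if `f(X) = ∑_{k=0}^n a_k X^{n-k}` has all coefficients of
nonnegative valuation and splits into linear factors over `K`, then every edge of its
Newton polygon has integral slope.  Here `m k` records the valuation `v (a k)` of the
nonzero coefficients, and the hypotheses on `i < j` say that the segment joining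
`(i, m i)` and `(j, m j)` is an edge of the Newton polygon. -/
theorem newton_polygon_integral_slope {K : Type*} [Field K]
    (v : AddValuation K (WithTop ℤ)) (hv : ∀ x : K, v x = ⊤ ↔ x = 0)
    (n : ℕ) (a : ℕ → K) (ha0 : a 0 ≠ 0)
    (m : ℕ → ℤ) (hm : ∀ k ≤ n, a k ≠ 0 → v (a k) = (m k : WithTop ℤ))
    (hnonneg : ∀ k ≤ n, a k ≠ 0 → 0 ≤ m k)
    (c : Fin n → K)
    (hsplit : ∑ k ∈ Finset.range (n + 1), C (a k) * X ^ (n - k)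
        = C (a 0) * ∏ i, (X - C (c i)))
    (i j : ℕ) (hij : i < j) (hjn : j ≤ n) (hai : a i ≠ 0) (haj : a j ≠ 0)
    (hedge : ∀ k ≤ n, a k ≠ 0 →
      ((j : ℤ) - (i : ℤ)) * m k ≥ ((j : ℤ) - (k : ℤ)) * m i + ((k : ℤ) - (i : ℤ)) * m j)
    (hstrict : ∀ k ≤ n, a k ≠ 0 → (k < i ∨ j < k) →
      ((j : ℤ) - (i : ℤ)) * m k > ((j : ℤ) - (k : ℤ)) * m i + ((k : ℤ) - (i : ℤ)) * m j) :
    ((j : ℤ) - (i : ℤ)) ∣ (m j - m i) :=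
  newton_polygon_integral_slope_general v n a ha0 m hm c hsplit i j hij hjn hai haj hedge
end

section
/- (Christoffel–Darboux formula.) Let L be a moment functional on ℂ[X] and let (Φ_l)_{l≥0} be a family of orthogonal polynomials for L, with deg Φ_l = l, L(Φ_l·Φ_m) = 0 for l ≠ m, and h_l := L(Φ_l²) ≠ 0 for every l. Let k_l denote the leading coefficient of Φ_l. Then for every l ≥ 0 and all x, y ∈ ℂ with x ≠ y, ∑_{n=0}^{l} (h_l/h_n)·Φ_n(x)·Φ_n(y) = (k_l/k_{l+1}) · (Φ_{l+1}(x)Φ_l(y) − Φ_l(x)Φ_{l+1}(y)) / (x − y). -/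
/-!
Expanding `X * Φ n` in the orthogonal basis gives
`x Φₙ(x) = ∑ⱼ L(X Φₙ Φⱼ) / hⱼ · Φⱼ(x)`, and the Jacobi coefficients `L(X Φₙ Φⱼ)` are symmetric
in `n, j` and vanish for `j > n + 1`, since `Φⱼ` is orthogonal to every polynomial of lower
degree. Hence in `(x - y) ∑_{n ≤ l} Φₙ(x) Φₙ(y) / hₙ` all terms cancel in pairs except those
coupling `Φ l` with `Φ (l + 1)`. Their coefficient is `L(X Φₗ Φₗ₊₁) = (kₗ / kₗ₊₁) hₗ₊₁`,
because `X Φₗ - (kₗ / kₗ₊₁) Φₗ₊₁` has degree at most `l`.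
-/

open Polynomial Finset

theorem sum_range_sum_range_mul_sub_swap_of_symm {R : Type*} [CommRing R] (A : ℕ → ℕ → R)
    (u v : ℕ → R) (l : ℕ) (hsymm : ∀ n j, A n j = A j n)
    (hzero : ∀ n < l, A n (l + 1) = 0) :
    ∑ n ∈ range (l + 1), ∑ j ∈ range (l + 2), A n j * u j * v n
        - ∑ n ∈ range (l + 1), ∑ j ∈ range (l + 2), A n j * v j * u n
      = A l (l + 1) * (u (l + 1) * v l - u l * v (l + 1)) := by
  have hsplit : ∀ u v : ℕ → R, ∑ n ∈ range (l + 1), ∑ j ∈ range (l + 2), A n j * u j * v n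
      = ∑ n ∈ range (l + 1), ∑ j ∈ range (l + 1), A n j * u j * v n
        + A l (l + 1) * u (l + 1) * v l := by
    intro u v
    simp_rw [sum_range_succ _ (l + 1), sum_add_distrib]
    rw [sum_range_succ (fun n => A n (l + 1) * u (l + 1) * v n),
      sum_eq_zero (s := range l) fun n hn => by rw [hzero n (mem_range.1 hn)]; ring, zero_add]
  have hsquare : ∑ n ∈ range (l + 1), ∑ j ∈ range (l + 1), A n j * u j * v n
      = ∑ n ∈ range (l + 1), ∑ j ∈ range (l + 1), A n j * v j * u n := by
    rw [sum_comm]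
    exact sum_congr rfl fun n _ => sum_congr rfl fun j _ => by rw [hsymm]; ring
  rw [hsplit u v, hsplit v u, hsquare]
  ring

variable {K : Type*} [Field K]

structure IsOrthogonalFamily (L : K[X] →ₗ[K] K) (Φ : ℕ → K[X]) : Prop where
  natDegree_eq : ∀ n, (Φ n).natDegree = n
  apply_mul_eq_zero : ∀ m n, m ≠ n → L (Φ m * Φ n) = 0
  apply_sq_ne_zero : ∀ n, L (Φ n ^ 2) ≠ 0

namespace IsOrthogonalFamily

open Submodule

variable {L : K[X] →ₗ[K] K} {Φ : ℕ → K[X]}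

theorem ne_zero (hΦ : IsOrthogonalFamily L Φ) (n : ℕ) : Φ n ≠ 0 := fun h =>
  hΦ.apply_sq_ne_zero n (by rw [h, sq, mul_zero, map_zero])

theorem degree_eq (hΦ : IsOrthogonalFamily L Φ) (n : ℕ) : (Φ n).degree = n := by
  rw [degree_eq_natDegree (hΦ.ne_zero n), hΦ.natDegree_eq]

theorem coeff_self (hΦ : IsOrthogonalFamily L Φ) (n : ℕ) :
    (Φ n).coeff n = (Φ n).leadingCoeff := by
  rw [leadingCoeff, hΦ.natDegree_eq]

theorem degree_X_mul (hΦ : IsOrthogonalFamily L Φ) (n : ℕ) :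
    (X * Φ n).degree = ↑(n + 1) := by
  rw [X_mul, degree_mul_X, hΦ.degree_eq]
  rfl

def toSequence (hΦ : IsOrthogonalFamily L Φ) : Polynomial.Sequence K := ⟨Φ, hΦ.degree_eq⟩

theorem span_image_Iio (hΦ : IsOrthogonalFamily L Φ) (m : ℕ) :
    span K (Φ '' Set.Iio m) = degreeLT K m :=
  hΦ.toSequence.span_degreeLT fun i _ => (leadingCoeff_ne_zero.2 (hΦ.ne_zero i)).isUnit

theorem span_image_Iic (hΦ : IsOrthogonalFamily L Φ) (m : ℕ) :
    span K (Φ '' Set.Iic m) = degreeLE K m :=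
  hΦ.toSequence.span_degreeLE fun i _ => (leadingCoeff_ne_zero.2 (hΦ.ne_zero i)).isUnit

theorem apply_mul_eq_zero_of_degree_lt (hΦ : IsOrthogonalFamily L Φ) {m : ℕ} {p : K[X]}
    (hp : p.degree < m) : L (Φ m * p) = 0 := by
  have hker : span K (Φ '' Set.Iio m) ≤ LinearMap.ker (L ∘ₗ LinearMap.mulLeft K (Φ m)) :=
    span_le.2 <| by
      rintro _ ⟨j, hj, rfl⟩
      exact hΦ.apply_mul_eq_zero m j (Nat.ne_of_gt hj)
  exact hker (by rw [hΦ.span_image_Iio]; exact mem_degreeLT.2 hp)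

theorem sum_smul_eq_of_degree_le (hΦ : IsOrthogonalFamily L Φ) {d : ℕ} {p : K[X]}
    (hp : p.degree ≤ d) :
    ∑ j ∈ range (d + 1), (L (Φ j * p) / L (Φ j ^ 2)) • Φ j = p := by
  let E : K[X] →ₗ[K] K[X] := ∑ j ∈ range (d + 1),
    LinearMap.smulRight ((L (Φ j ^ 2))⁻¹ • (L ∘ₗ LinearMap.mulLeft K (Φ j))) (Φ j)
  have hE : ∀ q, E q = ∑ j ∈ range (d + 1), (L (Φ j * q) / L (Φ j ^ 2)) • Φ j := fun q => by
    simp [E, LinearMap.sum_apply, div_eq_inv_mul, mul_smul]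
  have hEq : Set.EqOn E (LinearMap.id : K[X] →ₗ[K] K[X]) (span K (Φ '' Set.Iic d)) := by
    refine LinearMap.eqOn_span' ?_
    rintro _ ⟨i, hi, rfl⟩
    rw [hE, sum_eq_single i, LinearMap.id_apply, ← sq, div_self (hΦ.apply_sq_ne_zero i),
      one_smul]
    · intro j _ hji
      rw [hΦ.apply_mul_eq_zero j i hji, zero_div, zero_smul]
    · exact fun hi' => absurd (mem_range.2 (Nat.lt_succ_of_le hi)) hi'
  rw [← hE]
  exact hEq (by rw [hΦ.span_image_Iic]; exact mem_degreeLE.2 hp)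

theorem eval_eq_sum_of_degree_le (hΦ : IsOrthogonalFamily L Φ) {d : ℕ} {p : K[X]}
    (hp : p.degree ≤ d) (t : K) :
    p.eval t = ∑ j ∈ range (d + 1), L (Φ j * p) / L (Φ j ^ 2) * (Φ j).eval t := by
  conv_lhs => rw [← hΦ.sum_smul_eq_of_degree_le hp]
  simp [eval_finsetSum]

theorem apply_mul_eq_of_degree_le (hΦ : IsOrthogonalFamily L Φ) {n : ℕ} {p : K[X]}
    (hp : p.degree ≤ n) :
    L (Φ n * p) = p.coeff n / (Φ n).leadingCoeff * L (Φ n ^ 2) := by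
  set c := p.coeff n / (Φ n).leadingCoeff with hc
  have hlow : (p - c • Φ n).degree < n := by
    refine (degree_lt_iff_coeff_zero _ _).2 fun m hm => ?_
    rcases hm.eq_or_lt with rfl | hlt
    · rw [coeff_sub, coeff_smul, hΦ.coeff_self, smul_eq_mul, hc,
        div_mul_cancel₀ _ (leadingCoeff_ne_zero.2 (hΦ.ne_zero n)), sub_self]
    · rw [coeff_sub, coeff_smul,
        coeff_eq_zero_of_degree_lt (hp.trans_lt (by exact_mod_cast hlt)),
        coeff_eq_zero_of_degree_lt ((hΦ.degree_eq n).trans_lt (by exact_mod_cast hlt)),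
        smul_zero, sub_zero]
  have := hΦ.apply_mul_eq_zero_of_degree_lt hlow
  rw [mul_sub, map_sub, mul_smul_comm, map_smul, sub_eq_zero, ← sq, smul_eq_mul] at this
  exact this

theorem mul_sum_eval_mul_eval_div (hΦ : IsOrthogonalFamily L Φ) (l : ℕ) (x y : K) :
    x * ∑ n ∈ range (l + 1), (Φ n).eval x * (Φ n).eval y / L (Φ n ^ 2)
      = ∑ n ∈ range (l + 1), ∑ j ∈ range (l + 2),
          L (X * Φ n * Φ j) / (L (Φ n ^ 2) * L (Φ j ^ 2)) * (Φ j).eval x * (Φ n).eval y := by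
  rw [mul_sum]
  refine sum_congr rfl fun n hn => ?_
  have hdeg : (X * Φ n).degree ≤ ↑(l + 1) := by
    rw [hΦ.degree_X_mul]
    exact_mod_cast Nat.succ_le_succ (Nat.lt_succ_iff.1 (mem_range.1 hn))
  have hx := hΦ.eval_eq_sum_of_degree_le hdeg x
  rw [eval_mul, eval_X] at hx
  rw [← mul_div_assoc, ← mul_assoc, hx, sum_mul, sum_div]
  refine sum_congr rfl fun j _ => ?_
  rw [mul_comm (Φ j) (X * Φ n)]
  field_simp

theorem sub_mul_sum_eval_mul_eval_div (hΦ : IsOrthogonalFamily L Φ) (l : ℕ) (x y : K) :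
    (x - y) * ∑ n ∈ range (l + 1), (Φ n).eval x * (Φ n).eval y / L (Φ n ^ 2)
      = (Φ l).leadingCoeff / (Φ (l + 1)).leadingCoeff / L (Φ l ^ 2) *
          ((Φ (l + 1)).eval x * (Φ l).eval y - (Φ l).eval x * (Φ (l + 1)).eval y) := by
  set A : ℕ → ℕ → K := fun n j => L (X * Φ n * Φ j) / (L (Φ n ^ 2) * L (Φ j ^ 2))
  have hsymm : ∀ n j, A n j = A j n := fun n j => by
    simp only [A, mul_right_comm X (Φ n), mul_comm (L (Φ n ^ 2))]
  have hzero : ∀ n < l, A n (l + 1) = 0 := fun n hn => by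
    rw [div_eq_zero_iff, mul_comm]
    left
    refine hΦ.apply_mul_eq_zero_of_degree_lt ?_
    rw [hΦ.degree_X_mul]
    exact_mod_cast Nat.succ_lt_succ hn
  have hlast : L (X * Φ l * Φ (l + 1))
      = (Φ l).leadingCoeff / (Φ (l + 1)).leadingCoeff * L (Φ (l + 1) ^ 2) := by
    rw [mul_comm, hΦ.apply_mul_eq_of_degree_le (hΦ.degree_X_mul l).le, coeff_X_mul,
      hΦ.coeff_self]
  have hswap : ∑ n ∈ range (l + 1), (Φ n).eval x * (Φ n).eval y / L (Φ n ^ 2)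
      = ∑ n ∈ range (l + 1), (Φ n).eval y * (Φ n).eval x / L (Φ n ^ 2) := by
    simp only [mul_comm (eval x _)]
  rw [sub_mul, hΦ.mul_sum_eval_mul_eval_div, hswap, hΦ.mul_sum_eval_mul_eval_div,
    sum_range_sum_range_mul_sub_swap_of_symm A _ _ l hsymm hzero]
  simp only [A, hlast]
  field_simp [hΦ.apply_sq_ne_zero (l + 1)]

end IsOrthogonalFamily

open Polynomial Finset in
/-- Christoffel–Darboux formula: for a family `(Φ_l)` of orthogonal polynomials for the
moment functional `L` with `h_l = L(Φ_l²)` and leading coefficients `k_l`, the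
Christoffel–Darboux kernel `∑_{n=0}^l (h_l/h_n) Φ_n(x) Φ_n(y)` equals
`(k_l / k_{l+1}) · (Φ_{l+1}(x) Φ_l(y) - Φ_l(x) Φ_{l+1}(y)) / (x - y)`. -/
theorem christoffel_darboux (L : Polynomial ℂ →ₗ[ℂ] ℂ) (Φ : ℕ → Polynomial ℂ)
    (hdeg : ∀ l, (Φ l).natDegree = l)
    (horth : ∀ l m, l ≠ m → L (Φ l * Φ m) = 0)
    (hnonzero : ∀ l, L (Φ l ^ 2) ≠ 0)
    (l : ℕ) (x y : ℂ) (hxy : x ≠ y) :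
    ∑ n ∈ Finset.range (l + 1),
        (L (Φ l ^ 2) / L (Φ n ^ 2)) * (Φ n).eval x * (Φ n).eval y
      = ((Φ l).leadingCoeff / (Φ (l + 1)).leadingCoeff) *
        (((Φ (l + 1)).eval x * (Φ l).eval y - (Φ l).eval x * (Φ (l + 1)).eval y)
          / (x - y)) := by
  have hΦ : IsOrthogonalFamily L Φ := ⟨hdeg, horth, hnonzero⟩
  have hCD := hΦ.sub_mul_sum_eval_mul_eval_div l x y
  have hsum : ∑ n ∈ range (l + 1), L (Φ l ^ 2) / L (Φ n ^ 2) * (Φ n).eval x * (Φ n).eval y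
      = L (Φ l ^ 2) * ∑ n ∈ range (l + 1), (Φ n).eval x * (Φ n).eval y / L (Φ n ^ 2) := by
    rw [mul_sum]
    exact sum_congr rfl fun n _ => by ring
  rw [hsum, mul_div_assoc', eq_div_iff (sub_ne_zero.2 hxy)]
  field_simp [hnonzero l] at hCD ⊢
  linear_combination hCD
end

section
/- For every integer j ≥ 0, the contour integral of z^j·e^{−2/z} over the unit circle (traversed once counterclockwise) equals 2π√−1·(−2)^{j+1}/(j+1)!; equivalently, −(1/(4π√−1))·∮_{|z|=1} z^j e^{−2/z} dz = (−2)^j/(j+1)!. -/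
/-!
Expanding `e^{c/z} = ∑ cⁿ/n! · z⁻ⁿ`, the integrand `z^j e^{c/z}` is a Laurent series
converging uniformly on the circle, so it may be integrated term by term; only the `z⁻¹` term,
`n = j + 1`, survives, which gives `2πi · c^{j+1}/(j+1)!`. The theorem is the case `c = -2`,
`R = 1`.
-/

open Complex Metric

theorem circleIntegral.hasSum_integral_of_norm_le {E ι : Type*} [NormedAddCommGroup E]
    [NormedSpace ℂ E] [Countable ι]
    {F : ι → ℂ → E} {f : ℂ → E} {c : ℂ} {R : ℝ} (bound : ι → ℝ)
    (hF : ∀ n, ContinuousOn (F n) (sphere c |R|))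
    (h_bound : ∀ n, ∀ z ∈ sphere c |R|, ‖F n z‖ ≤ bound n) (h_summable : Summable bound)
    (h_lim : ∀ z ∈ sphere c |R|, HasSum (fun n ↦ F n z) (f z)) :
    HasSum (fun n ↦ ∮ z in C(c, R), F n z) (∮ z in C(c, R), f z) := by
  refine intervalIntegral.hasSum_integral_of_dominated_convergence (fun n _ ↦ |R| * bound n)
    (fun n ↦ ?_) (fun n ↦ .of_forall fun θ _ ↦ ?_)
    (.of_forall fun θ _ ↦ h_summable.mul_left _) intervalIntegrable_const
    (.of_forall fun θ _ ↦ (h_lim _ (circleMap_mem_sphere' c R θ)).const_smul _)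
  · simp only [deriv_circleMap]
    refine (((continuous_circleMap 0 R).mul continuous_const).smul ?_).aestronglyMeasurable
    exact (hF n).comp_continuous (continuous_circleMap c R) (circleMap_mem_sphere' c R)
  · rw [norm_smul, deriv_circleMap, norm_mul, norm_circleMap_zero, norm_I, mul_one]
    exact mul_le_mul_of_nonneg_left (h_bound n _ (circleMap_mem_sphere' c R θ)) (abs_nonneg R)

theorem circleIntegral_zpow_eq_ite {R : ℝ} (hR : R ≠ 0) (m : ℤ) :
    (∮ z in C(0, R), z ^ m) = if m = -1 then 2 * Real.pi * I else 0 := by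
  split_ifs with hm
  · simpa [hm] using circleIntegral.integral_sub_center_inv 0 hR
  · simpa using circleIntegral.integral_sub_zpow_of_ne hm 0 0 R

theorem hasSum_zpow_mul_exp_div (c : ℂ) {z : ℂ} (hz : z ≠ 0) (j : ℕ) :
    HasSum (fun n : ℕ ↦ c ^ n / n.factorial * z ^ ((j : ℤ) - n)) (z ^ j * exp (c / z)) := by
  rw [exp_eq_exp_ℂ]
  refine ((NormedSpace.expSeries_div_hasSum_exp (c / z)).mul_left (z ^ j)).congr_fun fun n ↦ ?_
  rw [div_pow, zpow_sub₀ hz, zpow_natCast, zpow_natCast]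
  ring

theorem summable_pow_div_factorial_mul_zpow_sub (a : ℝ) {R : ℝ} (hR : R ≠ 0) (j : ℤ) :
    Summable fun n : ℕ ↦ a ^ n / n.factorial * R ^ (j - n) := by
  refine ((Real.summable_pow_div_factorial (a / R)).mul_left (R ^ j)).congr fun n ↦ ?_
  rw [zpow_sub₀ hR, zpow_natCast, div_pow]
  field_simp

theorem circleIntegral_zpow_mul_exp_div (c : ℂ) {R : ℝ} (hR : 0 < R) (j : ℕ) :
    (∮ z in C(0, R), z ^ j * exp (c / z))
      = 2 * Real.pi * I * (c ^ (j + 1) / (j + 1).factorial) := by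
  set F : ℕ → ℂ → ℂ := fun n z ↦ c ^ n / n.factorial * z ^ ((j : ℤ) - n)
  have h_sphere : ∀ z ∈ sphere (0 : ℂ) |R|, z ≠ 0 := fun z hz ↦
    ne_zero_of_mem_sphere (abs_pos.2 hR.ne').ne' ⟨z, hz⟩
  have h_termwise :
      HasSum (fun n ↦ ∮ z in C(0, R), F n z) (∮ z in C(0, R), z ^ j * exp (c / z)) :=
    circleIntegral.hasSum_integral_of_norm_le
      (fun n ↦ ‖c‖ ^ n / n.factorial * R ^ ((j : ℤ) - n))
      (fun n ↦ continuousOn_const.mul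
        (continuousOn_id.zpow₀ _ fun z hz ↦ .inl (h_sphere z hz)))
      (fun n z hz ↦ by
        rw [mem_sphere_zero_iff_norm, abs_of_pos hR] at hz
        simp [F, norm_zpow, hz])
      (summable_pow_div_factorial_mul_zpow_sub _ hR.ne' _)
      (fun z hz ↦ hasSum_zpow_mul_exp_div c (h_sphere z hz) j)
  have h_residue : HasSum (fun n ↦ ∮ z in C(0, R), F n z)
      (2 * Real.pi * I * (c ^ (j + 1) / (j + 1).factorial)) := by
    have h_moment : ∀ n, (∮ z in C(0, R), F n z)
        = c ^ n / n.factorial * if (j : ℤ) - n = -1 then 2 * Real.pi * I else 0 := fun n ↦ by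
      rw [circleIntegral.integral_const_mul, circleIntegral_zpow_eq_ite hR.ne']
    convert hasSum_single (f := fun n ↦ ∮ z in C(0, R), F n z) (j + 1) fun n hn ↦ by
      rw [h_moment, if_neg (by omega), mul_zero] using 1
    rw [h_moment, if_pos (by push_cast; ring)]
    ring
  exact h_termwise.unique h_residue

/-- The moments of the Bessel weight: for every `j ≥ 0`,
`∮_{|z|=1} z^j e^{-2/z} dz = 2π√-1 · (-2)^{j+1}/(j+1)!`; equivalently,
`-(1/(4π√-1)) ∮_{|z|=1} z^j e^{-2/z} dz = (-2)^j/(j+1)!`. -/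
theorem bessel_weight_moments (j : ℕ) :
    (∮ z in C(0, 1), z ^ j * Complex.exp (-2 / z))
        = 2 * (Real.pi : ℂ) * Complex.I *
          ((-2 : ℂ) ^ (j + 1) / (Nat.factorial (j + 1) : ℂ)) ∧
    -(1 / (4 * (Real.pi : ℂ) * Complex.I)) *
        (∮ z in C(0, 1), z ^ j * Complex.exp (-2 / z))
      = (-2 : ℂ) ^ j / (Nat.factorial (j + 1) : ℂ) := by
  have h_moment := circleIntegral_zpow_mul_exp_div (-2) one_pos j
  refine ⟨h_moment, ?_⟩
  have hπ : (Real.pi : ℂ) ≠ 0 := ofReal_ne_zero.2 Real.pi_ne_zero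
  rw [h_moment]
  field_simp
  ring
end

section
/- Complex numbers x₁, x₂ and complex numbers z₁, z₂ with |z₁| = |z₂| = 1 satisfy x₁·z₁^j + x₂·z₂^j = (−2)^j/(j+1)! for every integer 0 ≤ j ≤ 2 if and only if, up to simultaneously swapping the indices 1 and 2, one has z₁ = (−5 + √−11)/6, z₂ = (−5 − √−11)/6, x₁ = (11 + √−11)/22, x₂ = (11 − √−11)/22. In particular, there exists a unique quadrature formula of degree 2 for the Bessel weight with 2 nodes on S¹ ⊂ ℂ. -/
/-!
Writing `s = z₁ + z₂` and `p = z₁ z₂`, the node polynomial `X² - s X + p` annihilates the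
quadrature functional, so the moments `1, -1, 2/3` give `s + p = -2/3`. On the unit circle
`conj z = z⁻¹`, hence `conj s = s / p` and `conj p = 1 / p`; conjugating the (real) relation
gives `s + 1 = -2p/3`. Together, `p = 1` and `s = -5/3`, so the nodes are the roots
`(-5 ± √-11)/6` of `3z² + 5z + 3`, and the weights follow from the first two equations.
-/

open Complex ComplexConjugate

lemma prony_two_nodes {R : Type*} [CommRing R] {x₁ x₂ z₁ z₂ m₀ m₁ m₂ : R}
    (h₀ : x₁ + x₂ = m₀) (h₁ : x₁ * z₁ + x₂ * z₂ = m₁) (h₂ : x₁ * z₁ ^ 2 + x₂ * z₂ ^ 2 = m₂) :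
    m₂ - (z₁ + z₂) * m₁ + z₁ * z₂ * m₀ = 0 := by
  linear_combination -h₂ + (z₁ + z₂) * h₁ - z₁ * z₂ * h₀

lemma conj_add_add_mul_mul_mul_eq_of_norm_eq_one {z₁ z₂ : ℂ} (h₁ : ‖z₁‖ = 1) (h₂ : ‖z₂‖ = 1) :
    conj (z₁ + z₂ + z₁ * z₂) * (z₁ * z₂) = z₁ + z₂ + 1 := by
  have u₁ : conj z₁ * z₁ = 1 := by simp [conj_mul', h₁]
  have u₂ : conj z₂ * z₂ = 1 := by simp [conj_mul', h₂]
  simp only [map_add, map_mul]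
  linear_combination (z₂ + conj z₂ * z₂) * u₁ + (z₁ + 1) * u₂

lemma eq_and_eq_or_eq_and_eq_of_add_eq_of_mul_eq {K : Type*} [Field K] [NeZero (2 : K)]
    {z₁ z₂ s p δ : K} (hs : z₁ + z₂ = s) (hp : z₁ * z₂ = p) (hδ : δ ^ 2 = s ^ 2 - 4 * p) :
    (z₁ = (s + δ) / 2 ∧ z₂ = (s - δ) / 2) ∨ (z₁ = (s - δ) / 2 ∧ z₂ = (s + δ) / 2) := by
  have hsq : (z₁ - z₂) ^ 2 = δ ^ 2 := by linear_combination (z₁ + z₂ + s) * hs - 4 * hp - hδ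
  simp only [eq_div_iff (two_ne_zero' K)]
  rcases sq_eq_sq_iff_eq_or_eq_neg.mp hsq with hd | hd
  · exact .inl ⟨by linear_combination hs + hd, by linear_combination hs - hd⟩
  · exact .inr ⟨by linear_combination hs + hd, by linear_combination hs - hd⟩

lemma sqrt_eleven_mul_I_sq : ((Real.sqrt 11 : ℂ) * I) ^ 2 = -11 := by
  rw [mul_pow, I_sq, ← ofReal_pow, Real.sq_sqrt (by norm_num)]
  norm_num

lemma bessel_moments_le_two_iff (x₁ x₂ z₁ z₂ : ℂ) :
    (∀ j : ℕ, j ≤ 2 →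
        x₁ * z₁ ^ j + x₂ * z₂ ^ j = (-2 : ℂ) ^ j / (Nat.factorial (j + 1) : ℂ)) ↔
      x₁ + x₂ = 1 ∧ x₁ * z₁ + x₂ * z₂ = -1 ∧ x₁ * z₁ ^ 2 + x₂ * z₂ ^ 2 = 2 / 3 := by
  refine ⟨fun h ↦ ?_, fun ⟨e₀, e₁, e₂⟩ j hj ↦ ?_⟩
  · refine ⟨?_, ?_, ?_⟩
    · simpa using h 0 (by norm_num)
    · simpa using h 1 (by norm_num)
    · have h₂ := h 2 le_rfl
      norm_num [Nat.factorial] at h₂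
      linear_combination h₂
  · interval_cases j <;> norm_num [Nat.factorial, e₀, e₁, e₂]

section Bessel

variable {w x₁ x₂ z₁ z₂ : ℂ}

lemma bessel_nodes_add_and_mul (h₁ : ‖z₁‖ = 1) (h₂ : ‖z₂‖ = 1)
    (e₀ : x₁ + x₂ = 1) (e₁ : x₁ * z₁ + x₂ * z₂ = -1) (e₂ : x₁ * z₁ ^ 2 + x₂ * z₂ ^ 2 = 2 / 3) :
    z₁ + z₂ = -5 / 3 ∧ z₁ * z₂ = 1 := by
  have hreal : z₁ + z₂ + z₁ * z₂ = -2 / 3 := by linear_combination prony_two_nodes e₀ e₁ e₂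
  have hconj : z₁ + z₂ + 1 = -2 / 3 * (z₁ * z₂) := by
    rw [← conj_add_add_mul_mul_mul_eq_of_norm_eq_one h₁ h₂, hreal, map_div₀, map_neg,
      map_ofNat, map_ofNat]
  exact ⟨by linear_combination -2 * hreal + 3 * hconj, by linear_combination 3 * hreal - 3 * hconj⟩

lemma bessel_nodes (hw : w ^ 2 = -11) (h₁ : ‖z₁‖ = 1) (h₂ : ‖z₂‖ = 1)
    (e₀ : x₁ + x₂ = 1) (e₁ : x₁ * z₁ + x₂ * z₂ = -1) (e₂ : x₁ * z₁ ^ 2 + x₂ * z₂ ^ 2 = 2 / 3) :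
    (z₁ = (-5 + w) / 6 ∧ z₂ = (-5 - w) / 6) ∨ (z₂ = (-5 + w) / 6 ∧ z₁ = (-5 - w) / 6) := by
  obtain ⟨hs, hp⟩ := bessel_nodes_add_and_mul h₁ h₂ e₀ e₁ e₂
  rcases eq_and_eq_or_eq_and_eq_of_add_eq_of_mul_eq hs hp (δ := w / 3)
    (by linear_combination hw / 9) with ⟨hz₁, hz₂⟩ | ⟨hz₁, hz₂⟩
  · exact .inl ⟨hz₁.trans (by ring), hz₂.trans (by ring)⟩
  · exact .inr ⟨hz₂.trans (by ring), hz₁.trans (by ring)⟩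

lemma bessel_weights (hw : w ^ 2 = -11) (hz₁ : z₁ = (-5 + w) / 6) (hz₂ : z₂ = (-5 - w) / 6)
    (e₀ : x₁ + x₂ = 1) (e₁ : x₁ * z₁ + x₂ * z₂ = -1) :
    x₁ = (11 + w) / 22 ∧ x₂ = (11 - w) / 22 := by
  have hcramer : x₁ * (z₁ - z₂) = -1 - z₂ := by linear_combination e₁ - z₂ * e₀
  rw [hz₁, hz₂] at hcramer
  have hx₁ : x₁ = (11 + w) / 22 := by
    linear_combination (-3 * w / 11) * hcramer + ((2 * x₁ - 1) / 22) * hw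
  exact ⟨hx₁, by linear_combination e₀ - hx₁⟩

lemma bessel_moments_of_nodes (hw : w ^ 2 = -11) :
    let z₁ := (-5 + w) / 6
    let z₂ := (-5 - w) / 6
    let x₁ := (11 + w) / 22
    let x₂ := (11 - w) / 22
    x₁ + x₂ = 1 ∧ x₁ * z₁ + x₂ * z₂ = -1 ∧ x₁ * z₁ ^ 2 + x₂ * z₂ ^ 2 = 2 / 3 :=
  ⟨by ring, by linear_combination hw / 66, by linear_combination hw / 396⟩

end Bessel

/-- Uniqueness of the quadrature formula of degree 2 for the Bessel weight with 2 nodes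
on `S¹ ⊂ ℂ`: weights `x₁, x₂` and nodes `z₁, z₂` of modulus 1 satisfy the quadrature
equations up to degree 2 if and only if, up to swapping indices,
`z₁ = (-5 + √-11)/6`, `z₂ = (-5 - √-11)/6`, `x₁ = (11 + √-11)/22`, `x₂ = (11 - √-11)/22`. -/
theorem bessel_quadrature_deg2_unique (x₁ x₂ z₁ z₂ : ℂ)
    (h₁ : ‖z₁‖ = 1) (h₂ : ‖z₂‖ = 1) :
    (∀ j : ℕ, j ≤ 2 →
        x₁ * z₁ ^ j + x₂ * z₂ ^ j = (-2 : ℂ) ^ j / (Nat.factorial (j + 1) : ℂ)) ↔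
    ((z₁ = (-5 + (Real.sqrt 11 : ℂ) * Complex.I) / 6 ∧
      z₂ = (-5 - (Real.sqrt 11 : ℂ) * Complex.I) / 6 ∧
      x₁ = (11 + (Real.sqrt 11 : ℂ) * Complex.I) / 22 ∧
      x₂ = (11 - (Real.sqrt 11 : ℂ) * Complex.I) / 22) ∨
     (z₂ = (-5 + (Real.sqrt 11 : ℂ) * Complex.I) / 6 ∧
      z₁ = (-5 - (Real.sqrt 11 : ℂ) * Complex.I) / 6 ∧
      x₂ = (11 + (Real.sqrt 11 : ℂ) * Complex.I) / 22 ∧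
      x₁ = (11 - (Real.sqrt 11 : ℂ) * Complex.I) / 22)) := by
  have hw := sqrt_eleven_mul_I_sq
  generalize (Real.sqrt 11 : ℂ) * Complex.I = w at hw ⊢
  rw [bessel_moments_le_two_iff]
  constructor
  · rintro ⟨e₀, e₁, e₂⟩
    rcases bessel_nodes hw h₁ h₂ e₀ e₁ e₂ with ⟨hz₁, hz₂⟩ | ⟨hz₂, hz₁⟩
    · exact .inl ⟨hz₁, hz₂, bessel_weights hw hz₁ hz₂ e₀ e₁⟩
    · refine .inr ⟨hz₂, hz₁, bessel_weights hw hz₂ hz₁ ?_ ?_⟩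
      · rwa [add_comm]
      · rwa [add_comm]
  · rintro (⟨rfl, rfl, rfl, rfl⟩ | ⟨rfl, rfl, rfl, rfl⟩)
    · exact bessel_moments_of_nodes hw
    · simpa only [add_comm] using bessel_moments_of_nodes hw
end

section
/- There do not exist complex numbers x₁, x₂, x₃ and pairwise distinct complex numbers z₁, z₂, z₃ lying in ℚ(√−11) with |z₁| = |z₂| = |z₃| = 1 such that ∑_{i=1}^{3} x_i·z_i^j = (−2)^j/(j+1)! for every integer 0 ≤ j ≤ 3. (Equivalently: there is no quadrature formula of degree 3 for the Bessel weight with 3 nodes on ℚ(√−11) ∩ S¹.) -/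
/-!
Eliminating the weights, the node polynomial `(X - z₀)(X - z₁)(X - z₂)` is annihilated by the
moment functional, which gives `1 + 2e₁ + 3e₂ + 3e₃ = 0` in the elementary symmetric functions of
the nodes. A point of `ℚ(√-11) ∩ S¹` is `-1` or a Cayley transform `(1 + r√-11) / (1 - r√-11)`
with `r ∈ ℚ`. A node `-1` forces the other two nodes to sum to `-1`, so they would be primitive
cube roots of unity, which are not in `ℚ(√-11)`. Otherwise, clearing denominators and separating
rational and irrational parts gives `11 e₂(r) = -19` and `3 e₁(r) = -11 e₃(r)`. Each `rᵢ` is then a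
root of `r (11r² - 19) = c (11r² - 3)` with `c = e₁(r)`, so `|rᵢ|₁₁ = |c|₁₁`, and the second
relation becomes `|c|₁₁² = 11`, which is impossible.
-/

open Complex

theorem padicNorm_prime_mul_sq_ne_one (p : ℕ) [Fact p.Prime] (q : ℚ) :
    padicNorm p (p * q ^ 2) ≠ 1 := by
  rcases eq_or_ne q 0 with rfl | hq
  · simp
  have hp : (1 : ℚ) < p := by exact_mod_cast (Fact.out : p.Prime).one_lt
  have hpq : (p : ℚ) * q ^ 2 ≠ 0 := mul_ne_zero (by positivity) (pow_ne_zero _ hq)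
  rw [padicNorm.eq_zpow_of_nonzero hpq, padicValRat.mul (by positivity) (pow_ne_zero _ hq),
    padicValRat.pow, padicValRat.self (by exact_mod_cast hp), ne_eq,
    zpow_eq_one_iff_right₀ (by positivity) hp.ne']
  omega

instance fact_prime_eleven : Fact (Nat.Prime 11) := ⟨by norm_num⟩

theorem padicNorm_eleven_eq_of_mul_eq_mul {r c : ℚ}
    (h : r * (11 * r ^ 2 - 19) = c * (11 * r ^ 2 - 3)) : padicNorm 11 r = padicNorm 11 c := by
  have hne : padicNorm 11 (11 * r ^ 2) ≠ 1 := by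
    exact_mod_cast padicNorm_prime_mul_sq_ne_one 11 r
  have hsub (n : ℕ) (hn : ¬ 11 ∣ n) :
      padicNorm 11 (11 * r ^ 2 - n) = max (padicNorm 11 (11 * r ^ 2)) 1 := by
    rw [sub_eq_add_neg, padicNorm.add_eq_max_of_ne] <;>
      rw [padicNorm.neg, (padicNorm.nat_eq_one_iff n).2 hn]
    exact hne
  have := congrArg (padicNorm 11) h
  rw [padicNorm.mul, padicNorm.mul, ← Nat.cast_ofNat (n := 19), ← Nat.cast_ofNat (n := 3),
    hsub 19 (by norm_num), hsub 3 (by norm_num)] at this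
  exact mul_right_cancel₀ (by positivity) this

theorem three_mul_sum_ne_neg_eleven_mul_prod {r₀ r₁ r₂ : ℚ}
    (h₂ : 11 * (r₀ * r₁ + r₀ * r₂ + r₁ * r₂) = -19) :
    3 * (r₀ + r₁ + r₂) ≠ -(11 * (r₀ * r₁ * r₂)) := by
  intro h₃
  set c := r₀ + r₁ + r₂
  -- `11 (r - r₀) (r - r₁) (r - r₂)` vanishes at each `rᵢ`; rewrite its coefficients by `h₂, h₃`.
  have hr₀ : padicNorm 11 r₀ = padicNorm 11 c :=
    padicNorm_eleven_eq_of_mul_eq_mul (by linear_combination -r₀ * h₂ + h₃)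
  have hr₁ : padicNorm 11 r₁ = padicNorm 11 c :=
    padicNorm_eleven_eq_of_mul_eq_mul (by linear_combination -r₁ * h₂ + h₃)
  have hr₂ : padicNorm 11 r₂ = padicNorm 11 c :=
    padicNorm_eleven_eq_of_mul_eq_mul (by linear_combination -r₂ * h₂ + h₃)
  have hc : padicNorm 11 (11 * c ^ 2) * padicNorm 11 c = padicNorm 11 c := calc
    _ = padicNorm 11 (11 * (r₀ * r₁ * r₂)) := by
      simp only [padicNorm.mul, pow_two, hr₀, hr₁, hr₂]; ring
    _ = padicNorm 11 ((3 : ℕ) * c) := by rw [← padicNorm.neg, ← h₃]; norm_cast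
    _ = padicNorm 11 c := by
      rw [padicNorm.mul, (padicNorm.nat_eq_one_iff 3).2 (by norm_num), one_mul]
  rcases eq_or_ne c 0 with hc0 | hc0
  · simp only [hc0, padicNorm.zero] at hr₀ hr₁
    simp [padicNorm.zero_of_padicNorm_eq_zero hr₀, padicNorm.zero_of_padicNorm_eq_zero hr₁] at h₂
  · exact padicNorm_prime_mul_sq_ne_one 11 c <| by
      exact_mod_cast (mul_left_eq_self₀.1 hc).resolve_right (padicNorm.nonzero hc0)

def unitCircleRatSqrtNeg (d : ℝ) : Set ℂ :=
  {z | (∃ a b : ℚ, z = a + b * √d * I) ∧ ‖z‖ = 1}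

theorem ratCast_add_mul_sqrt_mul_I_eq_zero {d : ℝ} (hd : 0 < d) {a b : ℚ}
    (h : (a : ℂ) + b * √d * I = 0) : a = 0 ∧ b = 0 := by
  have hre := congrArg re h
  have him := congrArg im h
  exact ⟨by simpa using hre, by simpa [Real.sqrt_ne_zero'.2 hd] using him⟩

theorem sq_add_mul_sq_of_norm_eq_one {d : ℝ} (hd : 0 ≤ d) {a b : ℚ}
    (h : ‖(a : ℂ) + b * √d * I‖ = 1) : (a : ℝ) ^ 2 + d * b ^ 2 = 1 := by
  have h2 : normSq ((a : ℂ) + b * √d * I) = 1 := by rw [← Complex.sq_norm, h, one_pow]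
  simp only [normSq_apply, add_re, add_im, mul_re, mul_im, ratCast_re, ratCast_im, ofReal_re,
    ofReal_im, I_re, I_im] at h2
  linear_combination h2 - b ^ 2 * Real.sq_sqrt hd

theorem cayley_of_sq_add_mul_sq_eq_one {K : Type*} [Field K] {d a b t : K} (ht : t ^ 2 = -d)
    (h : a ^ 2 + d * b ^ 2 = 1) (ha : a + 1 ≠ 0) :
    (a + b * t) * (1 - b / (a + 1) * t) = 1 + b / (a + 1) * t := by
  field_simp
  linear_combination h - b ^ 2 * ht

theorem eq_neg_one_or_exists_cayley {d : ℝ} (hd : 0 < d) {z : ℂ}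
    (hz : z ∈ unitCircleRatSqrtNeg d) :
    z = -1 ∨ ∃ r : ℚ, z * (1 - r * √d * I) = 1 + r * √d * I := by
  obtain ⟨⟨a, b, rfl⟩, hnorm⟩ := hz
  have hab := sq_add_mul_sq_of_norm_eq_one hd.le hnorm
  rcases eq_or_ne a (-1) with rfl | ha
  · left
    have hb : b = 0 := by
      push_cast at hab
      exact_mod_cast pow_eq_zero_iff two_ne_zero |>.1 (by nlinarith : (b : ℝ) ^ 2 = 0)
    simp [hb]
  · right
    refine ⟨b / (a + 1), ?_⟩
    have ht : ((√d : ℂ) * I) ^ 2 = -d := by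
      rw [mul_pow, I_sq, ← ofReal_pow, Real.sq_sqrt hd.le]; ring
    have := cayley_of_sq_add_mul_sq_eq_one (a := (a : ℂ)) (b := b) ht (by exact_mod_cast hab)
      (by exact_mod_cast fun h => ha (by linarith))
    push_cast
    simpa only [mul_assoc] using this

theorem add_ne_neg_one_of_mem_unitCircleRatSqrtNeg_eleven {z w : ℂ}
    (hz : z ∈ unitCircleRatSqrtNeg 11) (hw : w ∈ unitCircleRatSqrtNeg 11) : z + w ≠ -1 := by
  obtain ⟨⟨a, b, rfl⟩, hz⟩ := hz
  obtain ⟨⟨a', b', rfl⟩, hw⟩ := hw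
  intro hsum
  have hab : a ^ 2 + 11 * b ^ 2 = 1 := by
    exact_mod_cast sq_add_mul_sq_of_norm_eq_one (by norm_num) hz
  have hab' : a' ^ 2 + 11 * b' ^ 2 = 1 := by
    exact_mod_cast sq_add_mul_sq_of_norm_eq_one (by norm_num) hw
  obtain ⟨ha, hb⟩ := ratCast_add_mul_sqrt_mul_I_eq_zero (d := 11) (by norm_num)
    (a := a + a' + 1) (b := b + b') (by push_cast; linear_combination hsum)
  obtain rfl : a' = -1 - a := by linarith
  obtain rfl : b' = -b := by linarith
  have ha : a = -1 / 2 := by linear_combination (hab' - hab) / 2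
  apply padicNorm_prime_mul_sq_ne_one 11 (2 * b)
  have : (11 : ℚ) * (2 * b) ^ 2 = (3 : ℕ) := by subst ha; push_cast; linear_combination 4 * hab
  exact_mod_cast this ▸ (padicNorm.nat_eq_one_iff 3).2 (by norm_num)

theorem quadrature_moment_relation {R : Type*} [CommRing R] (x z : Fin 3 → R) (m : ℕ → R)
    (h : ∀ j ≤ 3, ∑ i, x i * z i ^ j = m j) :
    m 3 - (z 0 + z 1 + z 2) * m 2 + (z 0 * z 1 + z 0 * z 2 + z 1 * z 2) * m 1
      - z 0 * z 1 * z 2 * m 0 = 0 := by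
  rw [← h 0 (by norm_num), ← h 1 (by norm_num), ← h 2 (by norm_num), ← h 3 le_rfl]
  simp only [Fin.sum_univ_three]
  ring

/-- `-3` times the Bessel moment functional applied to `(X - a) (X - b) (X - c)`. -/
def besselCubic {R : Type*} [CommRing R] (a b c : R) : R :=
  1 + 2 * (a + b + c) + 3 * (a * b + a * c + b * c) + 3 * (a * b * c)

theorem besselCubic_eq_zero_of_quadrature (x z : Fin 3 → ℂ)
    (h : ∀ j : ℕ, j ≤ 3 → ∑ i, x i * z i ^ j = (-2 : ℂ) ^ j / (Nat.factorial (j + 1) : ℂ)) :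
    besselCubic (z 0) (z 1) (z 2) = 0 := by
  have := quadrature_moment_relation x z _ h
  norm_num [Nat.factorial] at this
  unfold besselCubic
  linear_combination -3 * this

theorem besselCubic_mul_of_cayley {R : Type*} [CommRing R] {z₀ z₁ z₂ u₀ u₁ u₂ : R}
    (h₀ : z₀ * (1 - u₀) = 1 + u₀) (h₁ : z₁ * (1 - u₁) = 1 + u₁) (h₂ : z₂ * (1 - u₂) = 1 + u₂) :
    besselCubic z₀ z₁ z₂ * ((1 - u₀) * (1 - u₁) * (1 - u₂)) =
      19 + 3 * (u₀ + u₁ + u₂) - (u₀ * u₁ + u₀ * u₂ + u₁ * u₂) - u₀ * u₁ * u₂ := by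
  unfold besselCubic
  linear_combination ((2 + 3 * z₁ + 3 * z₂ + 3 * z₁ * z₂) * (1 - u₁) * (1 - u₂)) * h₀
    + ((2 * (1 - u₀) + 3 * (1 + u₀) + 3 * z₂ * (1 - u₀) + 3 * z₂ * (1 + u₀)) * (1 - u₂)) * h₁
    + (2 * (1 - u₀) * (1 - u₁) + 3 * (1 + u₀) * (1 - u₁) + 3 * (1 - u₀) * (1 + u₁)
      + 3 * (1 + u₀) * (1 + u₁)) * h₂

theorem besselCubic_ne_zero {z₀ z₁ z₂ : ℂ} (h₀ : z₀ ∈ unitCircleRatSqrtNeg 11)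
    (h₁ : z₁ ∈ unitCircleRatSqrtNeg 11) (h₂ : z₂ ∈ unitCircleRatSqrtNeg 11) :
    besselCubic z₀ z₁ z₂ ≠ 0 := by
  intro hF
  have h11 : (0 : ℝ) < 11 := by norm_num
  rcases eq_neg_one_or_exists_cayley h11 h₀ with rfl | ⟨r₀, hr₀⟩
  · exact add_ne_neg_one_of_mem_unitCircleRatSqrtNeg_eleven h₁ h₂ <| by
      unfold besselCubic at hF; linear_combination -hF
  rcases eq_neg_one_or_exists_cayley h11 h₁ with rfl | ⟨r₁, hr₁⟩
  · exact add_ne_neg_one_of_mem_unitCircleRatSqrtNeg_eleven h₀ h₂ <| by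
      unfold besselCubic at hF; linear_combination -hF
  rcases eq_neg_one_or_exists_cayley h11 h₂ with rfl | ⟨r₂, hr₂⟩
  · exact add_ne_neg_one_of_mem_unitCircleRatSqrtNeg_eleven h₀ h₁ <| by
      unfold besselCubic at hF; linear_combination -hF
  have hcayley := besselCubic_mul_of_cayley hr₀ hr₁ hr₂
  rw [hF, zero_mul] at hcayley
  have ht : ((√11 : ℂ) * I) ^ 2 = -11 := by
    rw [mul_pow, I_sq, ← ofReal_pow, Real.sq_sqrt h11.le]; push_cast; ring
  obtain ⟨he₂, he₃⟩ := ratCast_add_mul_sqrt_mul_I_eq_zero h11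
    (a := 19 + 11 * (r₀ * r₁ + r₀ * r₂ + r₁ * r₂))
    (b := 3 * (r₀ + r₁ + r₂) + 11 * (r₀ * r₁ * r₂)) <| by
    push_cast
    linear_combination -hcayley
      + (r₀ * r₁ + r₀ * r₂ + r₁ * r₂ + r₀ * r₁ * r₂ * ((√11 : ℂ) * I) : ℂ) * ht
  refine three_mul_sum_ne_neg_eleven_mul_prod (r₀ := r₀) (r₁ := r₁) (r₂ := r₂) ?_ ?_ <;>
    linarith

open Finset in
/-- There is no quadrature formula of degree 3 for the Bessel weight with 3 nodes on
`ℚ(√-11) ∩ S¹`. -/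
theorem no_bessel_quadrature_deg3_three_nodes_on_Q_sqrt_neg11_S1 :
    ¬ ∃ (x z : Fin 3 → ℂ),
      Function.Injective z ∧
      (∀ i, ∃ a b : ℚ, z i = (a : ℂ) + (b : ℂ) * (Real.sqrt 11 : ℂ) * Complex.I) ∧
      (∀ i, ‖z i‖ = 1) ∧
      (∀ j : ℕ, j ≤ 3 →
        ∑ i, x i * z i ^ j = (-2 : ℂ) ^ j / (Nat.factorial (j + 1) : ℂ)) := by
  rintro ⟨x, z, -, hfield, hnorm, hquad⟩
  have hnode (i : Fin 3) : z i ∈ unitCircleRatSqrtNeg 11 := ⟨hfield i, hnorm i⟩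
  exact besselCubic_ne_zero (hnode 0) (hnode 1) (hnode 2)
    (besselCubic_eq_zero_of_quadrature x z hquad)
end
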